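/- arXiv:1601.01007 — 13 statements merged into one kernel-verified Lean document; each statement's English description precedes it below -/
import Mathlib

section
/- For all real x > 0, 2·(sinh x)/x + (tanh x)/x > 3. -/
open Real

private lemma aux_pos {f : ℝ → ℝ} (hf : Continuous f) (h0 : f 0 = 0)
    (hd : ∀ y ∈ Set.Ioi (0:ℝ), 0 < deriv f y) {x : ℝ} (hx : 0 < x) : 0 < f x := by
  have hm := strictMonoOn_of_deriv_pos (convex_Ici 0) hf.continuousOn
    (by simpa [interior_Ici] using hd)
  have := hm Set.self_mem_Ici (Set.mem_Ici.2 hx.le) hx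
  simpa [h0] using this

private lemma cosh_gt (x : ℝ) (hx : 0 < x) : 1 + x^2/2 < Real.cosh x := by
  have h := aux_pos (f := fun y => Real.cosh y - 1 - y^2/2)
    (by continuity) (by simp)
    (fun y hy => by
      have hd : HasDerivAt (fun y => Real.cosh y - 1 - y^2/2) _ y :=
        ((Real.hasDerivAt_cosh y).sub_const 1).sub ((hasDerivAt_pow 2 y).div_const 2)
      rw [hd.deriv]
      have := Real.self_lt_sinh_iff.2 hy
      push_cast
      nlinarith) hx
  beta_reduce at h
  linarith [h]

private lemma sinh_gt (x : ℝ) (hx : 0 < x) : x + x^3/6 < Real.sinh x := by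
  have h := aux_pos (f := fun y => Real.sinh y - y - y^3/6)
    (by continuity) (by simp)
    (fun y hy => by
      have hd : HasDerivAt (fun y => Real.sinh y - y - y^3/6) _ y :=
        ((Real.hasDerivAt_sinh y).sub (hasDerivAt_id y)).sub
          ((hasDerivAt_pow 3 y).div_const 6)
      rw [hd.deriv]
      push_cast
      have := cosh_gt y hy
      norm_num
      nlinarith) hx
  beta_reduce at h
  linarith [h]

private lemma sinh_lt_mul_cosh (x : ℝ) (hx : 0 < x) : Real.sinh x < x * Real.cosh x := by
  have h := aux_pos (f := fun y => y * Real.cosh y - Real.sinh y)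
    (by continuity) (by simp)
    (fun y hy => by
      have hd : HasDerivAt (fun y => y * Real.cosh y - Real.sinh y)
          (1 * Real.cosh y + y * Real.sinh y - Real.cosh y) y :=
        ((hasDerivAt_id y).mul (Real.hasDerivAt_cosh y)).sub (Real.hasDerivAt_sinh y)
      rw [hd.deriv]
      have hs := Real.sinh_pos_iff.2 hy
      have hy' := Set.mem_Ioi.1 hy
      nlinarith) hx
  beta_reduce at h
  linarith [h]

private lemma tanh_gt (x : ℝ) (hx : 0 < x) : (x - x^3/3) * Real.cosh x < Real.sinh x := by
  have h := aux_pos (f := fun y => Real.sinh y - (y - y^3/3) * Real.cosh y)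
    (by continuity) (by simp)
    (fun y hy => by
      have hd : HasDerivAt (fun y => Real.sinh y - (y - y^3/3) * Real.cosh y) _ y :=
        (Real.hasDerivAt_sinh y).sub
          (((hasDerivAt_id' y).sub ((hasDerivAt_pow 3 y).div_const 3)).mul
            (Real.hasDerivAt_cosh y))
      rw [hd.deriv]
      push_cast
      have hs := Real.sinh_pos_iff.2 hy
      have hc := Real.cosh_pos (x := y)
      have hm := sinh_lt_mul_cosh y hy
      have hy' := Set.mem_Ioi.1 hy
      norm_num
      nlinarith [mul_pos hy' hs, mul_lt_mul_of_pos_left hm hy', mul_pos (mul_pos hy' (mul_pos hy' hy')) hs]) hx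
  beta_reduce at h
  linarith [h]

theorem huygens_hyperbolic (x : ℝ) (hx : 0 < x) :
    2 * (Real.sinh x / x) + Real.tanh x / x > 3 := by
  have hc := Real.cosh_pos (x := x)
  have h1 := sinh_gt x hx
  have h2 := tanh_gt x hx
  have ht : x - x^3/3 < Real.tanh x := by
    rw [Real.tanh_eq_sinh_div_cosh, lt_div_iff₀ hc]
    exact h2
  have key : 3 * x < 2 * Real.sinh x + Real.tanh x := by nlinarith
  rw [gt_iff_lt, show 2 * (Real.sinh x / x) + Real.tanh x / x
      = (2 * Real.sinh x + Real.tanh x) / x by ring, lt_div_iff₀ hx]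
  linarith
end

section
/- For all x in (0, π/2), 2·(sin x)/x + (tan x)/x > 2·x/(sin x) + x/(tan x). -/
/-! With `r = sin x / x` and `c = cos x` the inequality reads `2 / r + c / r < 2 r + r / c`, i.e.
`c (2 + c) < r² (2c + 1)`. It follows from the classical bound `cos x < (sin x / x) ^ 3`
(itself a consequence of the Taylor bounds `x - x³/6 < sin x` and `cos x < 1 - x²/2 + x⁴/24`)
and the polynomial identity `(2c + 1)³ - c (2 + c)³ = (1 - c)³ (1 + c)`. -/

open Real

namespace Real

theorem cos_lt_one_sub_sq_div_two_add_pow_four_div {x : ℝ} (hx : 0 < x) :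
    cos x < 1 - x ^ 2 / 2 + x ^ 4 / 24 := by
  let f (t : ℝ) : ℝ := 1 - t ^ 2 / 2 + t ^ 4 / 24 - cos t
  have hderiv (t : ℝ) : deriv f t = sin t - (t - t ^ 3 / 6) := by
    simp (disch := fun_prop) [f]
    ring
  have hmono : StrictMonoOn f (Set.Ici 0) := by
    apply strictMonoOn_of_deriv_pos (convex_Ici 0) (by fun_prop)
    intro t ht
    rw [interior_Ici] at ht
    rw [hderiv, sub_pos]
    exact sin_gt_sub_cube ht
  have h0 : f 0 < f x := hmono Set.self_mem_Ici hx.le hx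
  simp only [f, cos_zero] at h0
  linarith

theorem cos_lt_sin_div_pow_three {x : ℝ} (hx : 0 < x) (hx6 : x ^ 2 ≤ 6) :
    cos x < (sin x / x) ^ 3 := by
  rw [div_pow, lt_div_iff₀ (by positivity), mul_comm]
  calc x ^ 3 * cos x < x ^ 3 * (1 - x ^ 2 / 2 + x ^ 4 / 24) :=
        mul_lt_mul_of_pos_left (cos_lt_one_sub_sq_div_two_add_pow_four_div hx) (by positivity)
    _ ≤ (x - x ^ 3 / 6) ^ 3 := by
        nlinarith [pow_pos hx 7]
    _ < sin x ^ 3 :=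
        pow_lt_pow_left₀ (sin_gt_sub_cube hx) (by nlinarith) three_ne_zero

end Real

theorem mul_two_add_pow_three_le {c : ℝ} (hc : 0 ≤ c) (hc1 : c ≤ 1) :
    c * (2 + c) ^ 3 ≤ (2 * c + 1) ^ 3 := by
  nlinarith [mul_nonneg (pow_nonneg (sub_nonneg.2 hc1) 3) (add_nonneg zero_le_one hc)]

theorem mul_two_add_lt_sq_mul {c r : ℝ} (hc : 0 < c) (hc1 : c ≤ 1) (h : c < r ^ 3) :
    c * (2 + c) < r ^ 2 * (2 * c + 1) := by
  by_contra! hle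
  have hc2 : c ^ 2 < (r ^ 2) ^ 3 := by
    rw [← pow_mul, mul_comm, pow_mul]
    exact pow_lt_pow_left₀ h hc.le two_ne_zero
  have hcube := pow_le_pow_left₀ (by positivity) hle 3
  have hpoly := mul_le_mul_of_nonneg_left (mul_two_add_pow_three_le hc.le hc1) (sq_nonneg c)
  have h2c : 0 < (2 * c + 1) ^ 3 := by positivity
  nlinarith

theorem two_div_add_div_lt {c r : ℝ} (hc : 0 < c) (hc1 : c ≤ 1) (h : c < r ^ 3) :
    2 / r + c / r < 2 * r + r / c := by
  have hr : 0 < r := by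
    by_contra! hr
    nlinarith [pow_nonneg (neg_nonneg.2 hr) 3]
  have key := mul_two_add_lt_sq_mul hc hc1 h
  rw [← sub_pos]
  have heq : 2 * r + r / c - (2 / r + c / r) = (r ^ 2 * (2 * c + 1) - c * (2 + c)) / (r * c) := by
    field_simp
  rw [heq]
  exact div_pos (by linarith) (by positivity)

theorem refined_huygens_circular_first (x : ℝ) (hx : 0 < x) (hx2 : x < Real.pi / 2) :
    2 * (Real.sin x / x) + Real.tan x / x > 2 * (x / Real.sin x) + x / Real.tan x := by
  have hx6 : x ^ 2 ≤ 6 := by nlinarith [pi_lt_four]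
  have hs : 0 < sin x := sin_pos_of_pos_of_lt_pi hx (by linarith [pi_pos])
  have hc : 0 < cos x := cos_pos_of_mem_Ioo ⟨by linarith, hx2⟩
  have h := two_div_add_div_lt hc (cos_le_one x) (cos_lt_sin_div_pow_three hx hx6)
  rw [tan_eq_sin_div_cos]
  convert h using 1 <;> field_simp
end

section
/- For all x in (0, π/2), 2·x/(sin x) + x/(tan x) > 3. -/
/-! Put `f y = y (2 + cos y) - 3 sin y`. Then `f 0 = 0`, `f' y = 2 - 2 cos y - y sin y` vanishes at `0`,
and `f'' y = sin y - y cos y` vanishes at `0` with derivative `y sin y > 0` on `(0, π)`.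
Integrating three times gives `3 sin x < x (2 + cos x)` on `(0, π]`, which is the inequality after
multiplying through by `sin x > 0`. -/

open Real Set

lemma pos_of_hasDerivAt_of_zero {f f' : ℝ → ℝ} {a x : ℝ} (hf : ∀ y, HasDerivAt f (f' y) y)
    (hf0 : f 0 = 0) (hf' : ∀ y ∈ Ioo 0 a, 0 < f' y) (hx : x ∈ Ioc 0 a) : 0 < f x := by
  have hmono : StrictMonoOn f (Icc 0 a) :=
    strictMonoOn_of_deriv_pos (convex_Icc 0 a)
      (fun y _ => (hf y).continuousAt.continuousWithinAt)
      (fun y hy => by rw [interior_Icc] at hy; rw [(hf y).deriv]; exact hf' y hy)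
  have h0a : (0 : ℝ) ∈ Icc 0 a := left_mem_Icc.2 (hx.1.le.trans hx.2)
  simpa [hf0] using hmono h0a (Ioc_subset_Icc_self hx) hx.1

lemma sin_sub_mul_cos_pos {x : ℝ} (hx : x ∈ Ioc 0 π) : 0 < sin x - x * cos x := by
  refine pos_of_hasDerivAt_of_zero (f := fun y => sin y - y * cos y) (f' := fun y => y * sin y)
    (fun y => ?_) (by simp)
    (fun y hy => mul_pos hy.1 (sin_pos_of_pos_of_lt_pi hy.1 hy.2)) hx
  exact ((hasDerivAt_sin y).sub ((hasDerivAt_id' y).mul (hasDerivAt_cos y))).congr_deriv (by ring)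

lemma two_sub_two_mul_cos_sub_mul_sin_pos {x : ℝ} (hx : x ∈ Ioc 0 π) :
    0 < 2 - 2 * cos x - x * sin x := by
  refine pos_of_hasDerivAt_of_zero (f := fun y => 2 - 2 * cos y - y * sin y)
    (f' := fun y => sin y - y * cos y) (fun y => ?_) (by simp)
    (fun y hy => sin_sub_mul_cos_pos (Ioo_subset_Ioc_self hy)) hx
  exact ((((hasDerivAt_cos y).const_mul 2).const_sub 2).sub
    ((hasDerivAt_id' y).mul (hasDerivAt_sin y))).congr_deriv (by ring)

lemma three_mul_sin_lt_mul_two_add_cos {x : ℝ} (hx : x ∈ Ioc 0 π) :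
    3 * sin x < x * (2 + cos x) := by
  have := pos_of_hasDerivAt_of_zero (f := fun y => y * (2 + cos y) - 3 * sin y)
    (f' := fun y => 2 - 2 * cos y - y * sin y) (fun y => ?_) (by simp)
    (fun y hy => two_sub_two_mul_cos_sub_mul_sin_pos (Ioo_subset_Ioc_self hy)) hx
  · linarith
  exact (((hasDerivAt_id' y).mul ((hasDerivAt_cos y).const_add 2)).sub
    ((hasDerivAt_sin y).const_mul 3)).congr_deriv (by ring)

theorem refined_huygens_circular_second (x : ℝ) (hx : 0 < x) (hx2 : x < Real.pi / 2) :
    2 * (x / Real.sin x) + x / Real.tan x > 3 := by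
  have hxπ : x ∈ Ioc 0 π := ⟨hx, by linarith [pi_pos]⟩
  have hsin : 0 < sin x := sin_pos_of_pos_of_lt_pi hx (by linarith [pi_pos])
  have hsum : 2 * (x / sin x) + x / tan x = x * (2 + cos x) / sin x := by
    rw [tan_eq_sin_div_cos, div_div_eq_mul_div]
    ring
  rw [hsum, gt_iff_lt, lt_div_iff₀ hsin]
  exact three_mul_sin_lt_mul_two_add_cos hxπ
end

section
/- For all real x ≠ 0, 2·(sinh x)/x + (tanh x)/x > 2·x/(sinh x) + x/(tanh x). -/
/-!
Write `s = sinh x`, `c = cosh x`. Clearing the positive denominator `x s c`, the inequality becomes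
`x² c (c + 2) < s² (2c + 1) = (c² - 1)(2c + 1)`, a polynomial inequality in `x²` and `c`. Both
sides agree up to order `x⁴`, so `c ≥ 1 + x²/2` is too weak, but the quartic Taylor bound
`1 + x²/2 + x⁴/24 ≤ cosh x` suffices; it holds for every real `x` because all terms of the cosh series
are nonnegative.
-/

open Real

theorem Real.one_add_sq_div_two_add_pow_four_div_le_cosh (x : ℝ) :
    1 + x ^ 2 / 2 + x ^ 4 / 24 ≤ cosh x := by
  have h := sum_le_hasSum (Finset.range 3)
    (fun n _ ↦ div_nonneg ((even_two_mul n).pow_nonneg x) (Nat.cast_nonneg _)) (hasSum_cosh x)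
  norm_num [Finset.sum_range_succ, Nat.factorial] at h
  linarith

theorem Real.mul_sinh_pos {x : ℝ} (hx : x ≠ 0) : 0 < x * sinh x := by
  rcases hx.lt_or_gt with hneg | hpos
  · exact mul_pos_of_neg_of_neg hneg (sinh_neg_iff.2 hneg)
  · exact mul_pos hpos (sinh_pos_iff.2 hpos)

theorem mul_mul_add_two_lt_sq_sub_one_mul_of_le {a c : ℝ} (ha : 0 < a)
    (hc : 1 + a / 2 + a ^ 2 / 24 ≤ c) :
    a * (c * (c + 2)) < (c ^ 2 - 1) * (2 * c + 1) := by
  have hb : a ^ 2 / 24 ≤ c - 1 - a / 2 := by linarith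
  set b := c - 1 - a / 2
  have hb_pos : 0 < b := lt_of_lt_of_le (by positivity) hb
  have hdiff : (c ^ 2 - 1) * (2 * c + 1) - a * (c * (c + 2)) =
      2 * (c - 1) ^ 2 * b + 3 * a * b + 7 * b ^ 2 + 6 * (b - a ^ 2 / 24) := by
    ring
  have : 0 < 2 * (c - 1) ^ 2 * b + 3 * a * b + 7 * b ^ 2 + 6 * (b - a ^ 2 / 24) := by
    have : 0 ≤ b - a ^ 2 / 24 := by linarith
    positivity
  linarith

theorem refined_huygens_hyperbolic_first (x : ℝ) (hx : x ≠ 0) :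
    2 * (Real.sinh x / x) + Real.tanh x / x > 2 * (x / Real.sinh x) + x / Real.tanh x := by
  have hxs : 0 < x * sinh x := mul_sinh_pos hx
  have hs : sinh x ≠ 0 := right_ne_zero_of_mul hxs.ne'
  have hc : 0 < cosh x := cosh_pos x
  have key : x ^ 2 * (cosh x * (cosh x + 2)) < sinh x ^ 2 * (2 * cosh x + 1) := by
    rw [sinh_sq]
    refine mul_mul_add_two_lt_sq_sub_one_mul_of_le (by positivity) ?_
    simpa only [← pow_mul] using one_add_sq_div_two_add_pow_four_div_le_cosh x
  have hdiff :
      2 * (sinh x / x) + sinh x / cosh x / x - (2 * (x / sinh x) + x / (sinh x / cosh x)) =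
        (sinh x ^ 2 * (2 * cosh x + 1) - x ^ 2 * (cosh x * (cosh x + 2))) /
          (x * sinh x * cosh x) := by
    field_simp
    ring
  rw [gt_iff_lt, ← sub_pos, tanh_eq_sinh_div_cosh, hdiff]
  exact div_pos (by linarith) (by positivity)
end

section
/- If p ≥ 1/3, then for all x in (0, π/2), (1−p)·(sin x)/x + p·(tan x)/x > 1. -/
/-!
Huygens' inequality `2 sin x + tan x > 3x` on `(0, π/2)` is the case `p = 1/3`: the difference
`2 sin x + tan x - 3x` vanishes at `0` and has derivative `2 cos x + 1 / cos² x - 3`, which is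
`(1 - cos x)² (2 cos x + 1) / cos² x > 0`. Since `sin x ≤ tan x`, the weighted mean
`(1 - p) sin x + p tan x` only grows with `p`.
-/

open Real Set

lemma three_lt_two_mul_add_one_div_sq {c : ℝ} (hc₀ : 0 < c) (hc₁ : c ≠ 1) :
    3 < 2 * c + 1 / c ^ 2 := by
  have key : 2 * c + 1 / c ^ 2 - 3 = (c - 1) ^ 2 * (2 * c + 1) / c ^ 2 := by
    field_simp
    ring
  have : 0 < (c - 1) ^ 2 := sq_pos_of_ne_zero (sub_ne_zero.2 hc₁)
  rw [← sub_pos, key]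
  positivity

theorem three_mul_lt_two_mul_sin_add_tan {x : ℝ} (hx₀ : 0 < x) (hx₁ : x < π / 2) :
    3 * x < 2 * sin x + tan x := by
  have cos_pos : ∀ y ∈ Ico 0 (π / 2), 0 < cos y := fun y hy =>
    cos_pos_of_mem_Ioo ⟨by linarith [hy.1, pi_pos], hy.2⟩
  have mono : StrictMonoOn (fun y => 2 * sin y + tan y - 3 * y) (Ico 0 (π / 2)) := by
    refine strictMonoOn_of_hasDerivWithinAt_pos (convex_Ico 0 (π / 2))
      (f' := fun y => 2 * cos y + 1 / cos y ^ 2 - 3) ?_ (fun y hy => ?_) (fun y hy => ?_)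
    · refine ContinuousOn.sub ?_ (continuousOn_const.mul continuousOn_id)
      exact (continuousOn_const.mul continuousOn_sin).add
        (continuousOn_tan.mono fun y hy => (cos_pos y hy).ne')
    · rw [interior_Ico] at hy
      have hcos := (cos_pos y (Ioo_subset_Ico_self hy)).ne'
      simpa using (((hasDerivAt_sin y).const_mul 2).fun_add (hasDerivAt_tan hcos)).fun_sub
        ((hasDerivAt_id y).const_mul 3) |>.hasDerivWithinAt
    · rw [interior_Ico] at hy
      have hcos_ne : cos y ≠ 1 := fun h => hy.1.ne' <|
        (cos_eq_one_iff_of_lt_of_lt (by linarith [hy.1, pi_pos]) (by linarith [hy.2, pi_pos])).1 h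
      linarith [three_lt_two_mul_add_one_div_sq (cos_pos y (Ioo_subset_Ico_self hy)) hcos_ne]
  simpa using mono ⟨le_rfl, by linarith [pi_pos]⟩ ⟨hx₀.le, hx₁⟩ hx₀

theorem sin_le_tan {x : ℝ} (hx₀ : 0 ≤ x) (hx₁ : x < π / 2) : sin x ≤ tan x := by
  rw [tan_eq_sin_div_cos]
  exact le_div_self (sin_nonneg_of_nonneg_of_le_pi hx₀ (by linarith [pi_pos]))
    (cos_pos_of_mem_Ioo ⟨by linarith [pi_pos], hx₁⟩) (cos_le_one x)

theorem weighted_huygens_circular_lower (p : ℝ) (hp : p ≥ 1/3) :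
    ∀ x : ℝ, 0 < x → x < Real.pi / 2 →
      (1 - p) * (Real.sin x / x) + p * (Real.tan x / x) > 1 := by
  intro x hx₀ hx₁
  have huygens := three_mul_lt_two_mul_sin_add_tan hx₀ hx₁
  have sin_le := sin_le_tan hx₀.le hx₁
  rw [← mul_div_assoc, ← mul_div_assoc, ← add_div, gt_iff_lt, one_lt_div hx₀]
  linarith [mul_nonneg (sub_nonneg.2 hp) (sub_nonneg.2 sin_le)]
end

section
/- If (1−p)·(sin x)/x + p·(tan x)/x > 1 holds for all x in (0, π/2), then p ≥ 1/3. -/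
/-!
Since `(1 - p) sin x + p tan x = x + (3p - 1) x³ / 6 + O(x⁵)`, for `p < 1/3` the weighted mean
drops below `x` near `0`. Quantitatively, the mean is increasing in `p` (as `sin x ≤ tan x`), and
for `p = 1/3 - x` the Taylor bounds `sin x ≤ x - x³/6 + x⁵/100`, `1 - x²/2 ≤ cos x` already
force it below `x` when `0 < x ≤ 1/3`.
-/

open Real

lemma sin_le_sub_cube_add_quintic {x : ℝ} (hx₀ : 0 ≤ x) (hx₁ : x ≤ 1) :
    sin x ≤ x - x ^ 3 / 6 + x ^ 5 / 100 := by
  have h := sin_bound (abs_le.2 ⟨by linarith, hx₁⟩)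
  rw [abs_of_nonneg hx₀] at h
  linarith [(abs_le.1 h).2]

lemma mul_sin_mul_cos_add_mul_sin_le_mul_cos {x : ℝ} (hx₀ : 0 < x) (hx : x ≤ 1 / 3) :
    (2 / 3 + x) * sin x * cos x + (1 / 3 - x) * sin x ≤ x * cos x := by
  set U := x - x ^ 3 / 6 + x ^ 5 / 100
  have hs : sin x ≤ U := sin_le_sub_cube_add_quintic hx₀.le (by linarith)
  have hc : 1 - x ^ 2 / 2 ≤ cos x := one_sub_sq_div_two_le_cos
  have hc₀ : 0 ≤ cos x := by nlinarith
  have hxU : x - U = x ^ 3 * (1 / 6 - x ^ 2 / 100) := by ring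
  have hUx : U ≤ x := by
    rw [← sub_nonneg, hxU]; exact mul_nonneg (by positivity) (by nlinarith)
  calc (2 / 3 + x) * sin x * cos x + (1 / 3 - x) * sin x
      ≤ (2 / 3 + x) * U * cos x + (1 / 3 - x) * U := by gcongr
    _ = x * cos x - (cos x * (x - U) - (1 / 3 - x) * U * (1 - cos x)) := by ring
    _ ≤ x * cos x - ((1 - x ^ 2 / 2) * (x - U) - (1 / 3 - x) * x * (x ^ 2 / 2)) := by
        have hc₁ := cos_le_one x
        gcongr; linarith
    _ = x * cos x - x ^ 4 * (1 / 2 - 28 / 300 * x + x ^ 3 / 200) := by rw [hxU]; ring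
    _ ≤ x * cos x := by
        have : 0 ≤ 1 / 2 - 28 / 300 * x + x ^ 3 / 200 := by nlinarith [pow_pos hx₀ 3]
        nlinarith [pow_pos hx₀ 4]

lemma weighted_sin_tan_le_self {x : ℝ} (hx₀ : 0 < x) (hx : x ≤ 1 / 3) :
    (1 - (1 / 3 - x)) * sin x + (1 / 3 - x) * tan x ≤ x := by
  have hc₀ : 0 < cos x := cos_pos_of_mem_Ioo ⟨by linarith [pi_gt_three], by linarith [pi_gt_three]⟩
  rw [tan_eq_sin_div_cos, ← sub_nonneg]
  have : x - ((1 - (1 / 3 - x)) * sin x + (1 / 3 - x) * (sin x / cos x)) =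
      (x * cos x - ((2 / 3 + x) * sin x * cos x + (1 / 3 - x) * sin x)) / cos x := by
    field_simp; ring
  rw [this]
  exact div_nonneg (sub_nonneg.2 (mul_sin_mul_cos_add_mul_sin_le_mul_cos hx₀ hx)) hc₀.le

lemma weighted_sin_tan_mono {x p q : ℝ} (hx₀ : 0 ≤ x) (hx : x < π / 2) (hpq : p ≤ q) :
    (1 - p) * sin x + p * tan x ≤ (1 - q) * sin x + q * tan x := by
  have : sin x ≤ tan x := (sin_le hx₀).trans (le_tan hx₀ hx)
  nlinarith

theorem weighted_huygens_circular_necessity (p : ℝ)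
    (h : ∀ x : ℝ, 0 < x → x < Real.pi / 2 →
      (1 - p) * (Real.sin x / x) + p * (Real.tan x / x) > 1) :
    p ≥ 1/3 := by
  by_contra! hp
  set x := min (1 / 3 - p) (1 / 3)
  have hx₀ : 0 < x := lt_min (by linarith) (by norm_num)
  have hx : x ≤ 1 / 3 := min_le_right _ _
  have hpx : p ≤ 1 / 3 - x := by linarith [min_le_left (1 / 3 - p) (1 / 3)]
  have hxπ : x < π / 2 := by linarith [pi_gt_three]
  have hgt := h x hx₀ hxπ
  rw [← mul_div_assoc, ← mul_div_assoc, ← add_div, gt_iff_lt, one_lt_div hx₀] at hgt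
  linarith [weighted_sin_tan_mono hx₀.le hxπ hpx, weighted_sin_tan_le_self hx₀ hx]
end

section
/- If p ≤ 1/3, then for all x > 0, (1−p)·(sinh x)/x + p·(tanh x)/x > 1. -/
open Real

private lemma pos_of_deriv (f f' : ℝ → ℝ) (hd : ∀ x, HasDerivAt f (f' x) x)
    (h0 : f 0 = 0) (hpos : ∀ x, 0 < x → 0 < f' x) : ∀ x, 0 < x → 0 < f x := by
  have hmono : StrictMonoOn f (Set.Ici 0) := by
    apply strictMonoOn_of_deriv_pos (convex_Ici 0)
    · exact Continuous.continuousOn (by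
        have : Differentiable ℝ f := fun x => (hd x).differentiableAt
        exact this.continuous)
    · intro x hx
      rw [interior_Ici] at hx
      rw [(hd x).deriv]
      exact hpos x hx
  intro x hx
  have := hmono (Set.self_mem_Ici) (Set.mem_Ici.2 hx.le) hx
  rwa [h0] at this

private lemma L1 : ∀ x : ℝ, 0 < x → 0 < x * Real.cosh x - Real.sinh x := by
  apply pos_of_deriv _ (fun x => x * Real.sinh x)
  · intro x
    have h : HasDerivAt (fun x : ℝ => x * Real.cosh x - Real.sinh x)
        (1 * Real.cosh x + x * Real.sinh x - Real.cosh x) x :=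
      ((hasDerivAt_id x).mul (Real.hasDerivAt_cosh x)).sub (Real.hasDerivAt_sinh x)
    convert h using 1; ring
  · simp
  · intro x hx
    exact mul_pos hx (Real.sinh_pos_iff.2 hx)

private lemma L2 : ∀ x : ℝ, 0 < x → 0 < Real.cosh x - 1 - x ^ 2 / 2 := by
  apply pos_of_deriv _ (fun x => Real.sinh x - x)
  · intro x
    have h : HasDerivAt (fun x : ℝ => Real.cosh x - 1 - x ^ 2 / 2)
        (Real.sinh x - 0 - 2 * x ^ 1 / 2) x := by
      exact (((Real.hasDerivAt_cosh x).sub (hasDerivAt_const x 1)).sub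
        (((hasDerivAt_pow 2 x)).div_const 2))
    convert h using 1; ring
  · simp
  · intro x hx
    simpa using Real.self_lt_sinh_iff.2 hx

private lemma L3 : ∀ x : ℝ, 0 < x → 0 < Real.sinh x - x - x ^ 3 / 6 := by
  apply pos_of_deriv _ (fun x => Real.cosh x - 1 - x ^ 2 / 2)
  · intro x
    have h : HasDerivAt (fun x : ℝ => Real.sinh x - x - x ^ 3 / 6)
        (Real.cosh x - 1 - 3 * x ^ 2 / 6) x :=
      ((Real.hasDerivAt_sinh x).sub (hasDerivAt_id x)).sub ((hasDerivAt_pow 3 x).div_const 6)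
    convert h using 1; ring
  · simp
  · exact L2

private lemma L4 : ∀ x : ℝ, 0 < x → 0 < Real.sinh x - (x - x ^ 3 / 3) * Real.cosh x := by
  apply pos_of_deriv _ (fun x => x * ((x * Real.cosh x - Real.sinh x) + x ^ 2 / 3 * Real.sinh x))
  · intro x
    have h : HasDerivAt (fun x : ℝ => Real.sinh x - (x - x ^ 3 / 3) * Real.cosh x)
        (Real.cosh x - ((1 - 3 * x ^ 2 / 3) * Real.cosh x + (x - x ^ 3 / 3) * Real.sinh x)) x := by
      exact (Real.hasDerivAt_sinh x).sub
        (HasDerivAt.mul ((hasDerivAt_id x).sub ((hasDerivAt_pow 3 x).div_const 3))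
          (Real.hasDerivAt_cosh x))
    convert h using 1; ring
  · simp
  · intro x hx
    apply mul_pos hx
    have h1 := L1 x hx
    have h2 : 0 < x ^ 2 / 3 * Real.sinh x :=
      mul_pos (by positivity) (Real.sinh_pos_iff.2 hx)
    linarith

theorem weighted_huygens_hyperbolic_lower (p : ℝ) (hp : p ≤ 1/3) :
    ∀ x : ℝ, 0 < x →
      (1 - p) * (Real.sinh x / x) + p * (Real.tanh x / x) > 1 := by
  intro x hx
  have hcosh : (1:ℝ) ≤ Real.cosh x := Real.one_le_cosh x
  have hcosh' : (0:ℝ) < Real.cosh x := Real.cosh_pos x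
  have hsinh : 0 < Real.sinh x := Real.sinh_pos_iff.2 hx
  have htanh_lt_sinh : Real.tanh x ≤ Real.sinh x := by
    rw [Real.tanh_eq_sinh_div_cosh]
    exact div_le_self hsinh.le hcosh
  have h3 := L3 x hx
  have h4 := L4 x hx
  have htanh : x - x ^ 3 / 3 < Real.tanh x := by
    rw [Real.tanh_eq_sinh_div_cosh, lt_div_iff₀ hcosh']
    linarith
  have hkey : 3 * x < 2 * Real.sinh x + Real.tanh x := by nlinarith
  have hst : Real.tanh x / x ≤ Real.sinh x / x := by gcongr
  have h1 : 1 < 2/3 * (Real.sinh x / x) + 1/3 * (Real.tanh x / x) := by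
    rw [← sub_pos]
    have heq : 2/3 * (Real.sinh x / x) + 1/3 * (Real.tanh x / x) - 1
        = (2 * Real.sinh x + Real.tanh x - 3 * x) / (3 * x) := by
      field_simp
    rw [heq]
    exact div_pos (by linarith) (by positivity)
  nlinarith [mul_nonneg (by linarith : (0:ℝ) ≤ 1/3 - p)
    (sub_nonneg.2 hst)]
end

section
/- If (1−p)·(sinh x)/x + p·(tanh x)/x > 1 holds for all x > 0, then p ≤ 1/3. -/
noncomputable def Pexp (t : ℝ) : ℝ := 1 + t + t^2/2 + t^3/6 + t^4/24 + t^5/120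

lemma exp_poly_bound (t : ℝ) (ht : |t| ≤ 1) :
    |Real.exp t - Pexp t| ≤ |t|^6 * (7/4320) := by
  have h := Real.exp_bound ht (n := 6) (by norm_num)
  simp [Finset.sum_range_succ, Nat.factorial] at h
  unfold Pexp
  convert h using 2
  norm_num

lemma mul_le_abs_bound (u v B : ℝ) (h1 : -B ≤ v) (h2 : v ≤ B) : u * v ≤ |u| * B :=
  calc u * v ≤ |u * v| := le_abs_self _
    _ = |u| * |v| := abs_mul _ _
    _ ≤ |u| * B := mul_le_mul_of_nonneg_left (abs_le.mpr ⟨h1, h2⟩) (abs_nonneg _)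

set_option maxHeartbeats 1000000 in
theorem weighted_huygens_hyperbolic_necessity (p : ℝ)
    (h : ∀ x : ℝ, 0 < x →
      (1 - p) * (Real.sinh x / x) + p * (Real.tanh x / x) > 1) :
    p ≤ 1/3 := by
  by_contra hp
  push_neg at hp
  set δ : ℝ := p/2 - 1/6 with hδdef
  have hδ : 0 < δ := by simp only [hδdef]; linarith
  set K : ℝ := 11/120 + |p|/8 with hKdef
  set M : ℝ := |1-p| * 32 * (7/4320) + |p| * (7/4320) + 7/4320 with hMdef
  have hK : 0 ≤ K := by positivity
  have hM : 0 ≤ M := by positivity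
  set x : ℝ := min (1/2) (δ/(K+M+1)) with hxdef
  have hx0 : 0 < x := by
    apply lt_min (by norm_num)
    positivity
  have hx1 : x ≤ 1/2 := min_le_left _ _
  have hx2 : x ≤ δ/(K+M+1) := min_le_right _ _
  have hxle1 : x ≤ 1 := by linarith
  have habs1 : |x| ≤ 1 := by rw [abs_of_pos hx0]; linarith
  have habs2 : |(-x)| ≤ 1 := by rw [abs_neg]; exact habs1
  have habs3 : |(2*x)| ≤ 1 := by rw [abs_of_pos (by linarith)]; linarith
  have habs4 : |(-(2*x))| ≤ 1 := by rw [abs_neg]; exact habs3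
  have hxabs : |x| = x := abs_of_pos hx0
  have ha := exp_poly_bound x habs1
  have hb := exp_poly_bound (-x) habs2
  have hc := exp_poly_bound (2*x) habs3
  have hd := exp_poly_bound (-(2*x)) habs4
  rw [hxabs] at ha
  rw [abs_neg, hxabs] at hb
  rw [abs_of_pos (by linarith : (0:ℝ) < 2*x)] at hc
  rw [abs_neg, abs_of_pos (by linarith : (0:ℝ) < 2*x)] at hd
  set a : ℝ := Real.exp x - Pexp x with hadef
  set b : ℝ := Real.exp (-x) - Pexp (-x) with hbdef
  set c : ℝ := Real.exp (2*x) - Pexp (2*x) with hcdef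
  set d : ℝ := Real.exp (-(2*x)) - Pexp (-(2*x)) with hddef
  rw [abs_le] at ha hb hc hd
  clear_value a b c d
  clear_value δ K M x
  have hmain := h x hx0
  have hch : 0 < Real.cosh x := Real.cosh_pos x
  have hG : (1-p) * (Real.sinh x * Real.cosh x) + p * Real.sinh x > x * Real.cosh x := by
    rw [Real.tanh_eq_sinh_div_cosh] at hmain
    have e1 : (1-p) * (Real.sinh x / x) + p * (Real.sinh x / Real.cosh x / x)
        = ((1-p) * (Real.sinh x * Real.cosh x) + p * Real.sinh x) / (x * Real.cosh x) := by
      field_simp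
    rw [e1, gt_iff_lt, lt_div_iff₀ (by positivity)] at hmain
    linarith
  have hsinh : Real.sinh x = (Real.exp x - Real.exp (-x))/2 := Real.sinh_eq x
  have hcosh : Real.cosh x = (Real.exp x + Real.exp (-x))/2 := Real.cosh_eq x
  have hsc : Real.sinh x * Real.cosh x = (Real.exp (2*x) - Real.exp (-(2*x)))/4 := by
    rw [hsinh, hcosh]
    have e1 : Real.exp (2*x) = Real.exp x * Real.exp x := by
      rw [← Real.exp_add]; ring_nf
    have e2 : Real.exp (-(2*x)) = Real.exp (-x) * Real.exp (-x) := by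
      rw [← Real.exp_add]; ring_nf
    rw [e1, e2]; ring
  rw [hsc, hsinh, hcosh] at hG
  have hexa : Real.exp x = Pexp x + a := by rw [hadef]; ring
  have hexb : Real.exp (-x) = Pexp (-x) + b := by rw [hbdef]; ring
  have hexc : Real.exp (2*x) = Pexp (2*x) + c := by rw [hcdef]; ring
  have hexd : Real.exp (-(2*x)) = Pexp (-(2*x)) + d := by rw [hddef]; ring
  rw [hexa, hexb, hexc, hexd] at hG
  have hid : (1-p) * ((Pexp (2*x) + c - (Pexp (-(2*x)) + d))/4) + p * ((Pexp x + a - (Pexp (-x) + b))/2)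
      - x * ((Pexp x + a + (Pexp (-x) + b))/2)
      = x^3 * (1/6 - p/2) + x^5 * (11/120 - p/8)
        + ((1-p) * (c - d)/4 + p * (a - b)/2 - x * (a + b)/2) := by
    simp only [Pexp]; ring
  have hG2 : x^3 * (1/6 - p/2) + x^5 * (11/120 - p/8)
        + ((1-p) * (c - d)/4 + p * (a - b)/2 - x * (a + b)/2) > 0 := by
    rw [← hid]; linarith [hG]
  -- bound error terms
  set e6 : ℝ := x^6 * (7/4320) with he6def
  have he6 : 0 ≤ e6 := by positivity
  have h64 : (2*x)^6 * (7/4320) = 128 * e6 / 2 := by rw [he6def]; ring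
  rw [h64] at hc hd
  have hcd : (1-p) * (c - d) ≤ |1-p| * (128 * e6) := by
    apply mul_le_abs_bound <;> linarith [hc.1, hc.2, hd.1, hd.2]
  have hab : p * (a - b) ≤ |p| * (2 * e6) := by
    apply mul_le_abs_bound <;> linarith [ha.1, ha.2, hb.1, hb.2]
  have hxab : -(x * (a + b)) ≤ 2 * e6 := by
    have h1 : x * (-(2*e6)) ≤ x * (a + b) :=
      mul_le_mul_of_nonneg_left (by linarith [ha.1, hb.1]) hx0.le
    have h2 : 0 ≤ e6 * (1 - x) := mul_nonneg he6 (by linarith)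
    linarith [h1, h2]
  -- the x^5 coefficient bound
  have hx5 : (0:ℝ) < x^5 := by positivity
  have hKc : 11/120 - p/8 ≤ K := by
    rw [hKdef]; linarith [neg_abs_le p, le_abs_self p]
  have h5 : x^5 * (11/120 - p/8) ≤ x^5 * K := mul_le_mul_of_nonneg_left hKc hx5.le
  -- combine: 0 < -δ*x^3 + K*x^5 + M*x^6
  have hMx : |1-p| * (128 * e6)/4 + |p| * (2*e6)/2 + e6 = M * x^6 := by
    rw [hMdef, he6def]; ring
  have hG3 : 0 < -(δ * x^3) + K * x^5 + M * x^6 := by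
    rw [← hMx]
    have heq : x^3 * (1/6 - p/2) = -(δ * x^3) := by rw [hδdef]; ring
    linarith [hG2, hcd, hab, hxab, h5, heq]
  -- x^5 ≤ x^4, x^6 ≤ x^4
  have hx54 : x^5 ≤ x^4 := pow_le_pow_of_le_one hx0.le hxle1 (by norm_num)
  have hx64 : x^6 ≤ x^4 := pow_le_pow_of_le_one hx0.le hxle1 (by norm_num)
  have hG4 : δ * x^3 < (K + M) * x^4 := by
    linarith [mul_le_mul_of_nonneg_left hx54 hK, mul_le_mul_of_nonneg_left hx64 hM, hG3]
  have hδx : δ < (K + M) * x := by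
    have hx3 : (0:ℝ) < x^3 := by positivity
    have h7 : δ * x^3 < ((K+M)*x) * x^3 := by linarith [hG4]
    exact lt_of_mul_lt_mul_right h7 hx3.le
  have hfin : x * (K + M + 1) ≤ δ := by
    rw [← le_div_iff₀ (by positivity : (0:ℝ) < K+M+1)]
    exact hx2
  linarith [hδx, hfin, hx0]
end

section
/- Let ν > −1 and define I_ν(x) = Σ_{n≥0} (x²/4)ⁿ / ((ν+1)_n · n!), where (ν+1)_n = Γ(ν+n+1)/Γ(ν+1) is the Pochhammer symbol. Then for all real x ≠ 0, I_ν(x)·I_{ν+2}(x) < ((ν+2)/(ν+1))·I_{ν+1}(x)². -/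
noncomputable def besselINorm (ν x : ℝ) : ℝ :=
  ∑' n : ℕ, (1/4 : ℝ)^n * x^(2*n) /
    ((Real.Gamma (ν + n + 1) / Real.Gamma (ν + 1)) * n.factorial)

/-!
Write `I_ν(x) = ₀F₁(; ν + 1; x² / 4)`. By the Cauchy product and the Chu–Vandermonde identity,
the coefficient of `yⁿ` in `₀F₁(; a; y) ₀F₁(; b; y)` is `(a + b + n - 1)ₙ / (n! (a)ₙ (b)ₙ)`.
For the pairs `(a, a + 2)` and `(a + 1, a + 1)` the numerators coincide, so for `y ≥ 0` the
inequality reduces coefficientwise to `a (a + 1)ₙ² ≤ (a + 1) (a)ₙ (a + 2)ₙ`, a consequence of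
`(a)ₙ (a + n) = a (a + 1)ₙ`; the constant coefficients already satisfy `1 < (a + 1) / a`.
-/

open Finset Polynomial
open scoped Nat

namespace Real

theorem Gamma_add_nat_div_Gamma_eq {s : ℝ} (hs : ∀ k : ℕ, s ≠ -k) (n : ℕ) :
    Gamma (s + n) / Gamma s = (ascPochhammer ℝ n).eval s := by
  have h := Complex.Gamma_add_nat_div_Gamma_eq (s : ℂ) (n := n) (fun k => by exact_mod_cast hs k)
  rw [← ascPochhammer_map (algebraMap ℝ ℂ), eval_map] at h
  have h' := h.trans (eval₂_at_apply (algebraMap ℝ ℂ) s)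
  rw [Complex.coe_algebraMap, ← Complex.ofReal_natCast, ← Complex.ofReal_add, Complex.Gamma_ofReal,
    Complex.Gamma_ofReal, ← Complex.ofReal_div] at h'
  exact_mod_cast h'

end Real

section Pochhammer

variable {R : Type*} [CommRing R]

theorem ascPochhammer_eval_add_nat (a : R) (m n : ℕ) :
    (ascPochhammer R (m + n)).eval a =
      (ascPochhammer R m).eval a * (ascPochhammer R n).eval (a + m) := by
  rw [← ascPochhammer_mul, eval_mul, eval_comp]
  simp

/-- Chu–Vandermonde, transported from `Ring.descPochhammer_smeval_add` along
`(descPochhammer R k).eval x = (ascPochhammer R k).eval (x - k + 1)`. -/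
theorem ascPochhammer_eval_add_add_sub_one (a b : R) (n : ℕ) :
    (ascPochhammer R n).eval (a + b + n - 1) = ∑ ij ∈ antidiagonal n,
      n.choose ij.1 * ((ascPochhammer R ij.2).eval (a + ij.1) *
        (ascPochhammer R ij.1).eval (b + ij.2)) := by
  have h := Ring.descPochhammer_smeval_add n (Commute.all (b + n - 1) (a + n - 1))
  rw [descPochhammer_smeval_eq_ascPochhammer, ascPochhammer_smeval_eq_eval] at h
  convert h using 1
  · congr 1; ring
  refine sum_congr rfl fun ij hij => ?_
  have hn : (ij.1 : R) + ij.2 = n := by rw [← Nat.cast_add, mem_antidiagonal.mp hij]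
  rw [descPochhammer_smeval_eq_ascPochhammer, ascPochhammer_smeval_eq_eval,
    descPochhammer_smeval_eq_ascPochhammer, ascPochhammer_smeval_eq_eval, mul_comm (eval _ _)]
  congr 3 <;> linear_combination hn

end Pochhammer

theorem min_one_le_ascPochhammer_eval {a : ℝ} (ha : 0 < a) (n : ℕ) :
    min a 1 ≤ (ascPochhammer ℝ n).eval a := by
  induction n with
  | zero => simp
  | succ n ih =>
    rw [ascPochhammer_succ_eval]
    rcases n with _ | n
    · simp
    · have : (1 : ℝ) ≤ a + (n + 1 : ℕ) := by push_cast; linarith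
      nlinarith [min_le_left a 1, lt_min ha one_pos]

theorem sum_antidiagonal_inv_factorial_mul_ascPochhammer {a b : ℝ} (ha : 0 < a) (hb : 0 < b)
    (n : ℕ) :
    ∑ ij ∈ antidiagonal n, ((ij.1 ! * (ascPochhammer ℝ ij.1).eval a)⁻¹ *
        (ij.2 ! * (ascPochhammer ℝ ij.2).eval b)⁻¹) =
      (ascPochhammer ℝ n).eval (a + b + n - 1) /
        (n ! * (ascPochhammer ℝ n).eval a * (ascPochhammer ℝ n).eval b) := by
  rw [ascPochhammer_eval_add_add_sub_one, sum_div]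
  refine sum_congr rfl fun ⟨i, j⟩ hij => ?_
  obtain rfl : i + j = n := mem_antidiagonal.mp hij
  have hfac : ((i + j) ! : ℝ) = (i + j).choose i * i ! * j ! := by
    rw [Nat.choose_symm_add]
    exact_mod_cast (Nat.add_choose_mul_factorial_mul_factorial i j).symm
  have hpa : (ascPochhammer ℝ (i + j)).eval a =
      (ascPochhammer ℝ i).eval a * (ascPochhammer ℝ j).eval (a + i) :=
    ascPochhammer_eval_add_nat a i j
  have hpb : (ascPochhammer ℝ (i + j)).eval b =
      (ascPochhammer ℝ j).eval b * (ascPochhammer ℝ i).eval (b + j) := by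
    rw [add_comm i j, ascPochhammer_eval_add_nat]
  have := ascPochhammer_pos i a ha
  have := ascPochhammer_pos j b hb
  have := ascPochhammer_pos j (a + i) (by positivity)
  have := ascPochhammer_pos i (b + j) (by positivity)
  have := (i + j).choose_pos (Nat.le_add_right i j)
  rw [hfac, hpa, hpb]
  field_simp

theorem ascPochhammer_eval_turan {a : ℝ} (ha : 0 < a) (n : ℕ) :
    a * (ascPochhammer ℝ n).eval (a + 1) ^ 2 ≤
      (a + 1) * ((ascPochhammer ℝ n).eval a * (ascPochhammer ℝ n).eval (a + 2)) := by
  have shift (c : ℝ) : (ascPochhammer ℝ n).eval c * (c + n) =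
      c * (ascPochhammer ℝ n).eval (c + 1) := by
    rw [← ascPochhammer_succ_eval, add_comm n 1, ascPochhammer_eval_add_nat]
    simp
  have h₁ := shift a
  have h₂ := shift (a + 1)
  rw [show a + 1 + 1 = a + 2 by ring] at h₂
  -- after multiplying by `a + n`, the two sides differ only by the factors `a + n ≤ a + 1 + n`
  have key : (a + 1) * ((ascPochhammer ℝ n).eval a * (ascPochhammer ℝ n).eval (a + 2)) * (a + n) =
      a * (ascPochhammer ℝ n).eval (a + 1) ^ 2 * (a + 1 + n) := by
    linear_combination ((a + 1) * (ascPochhammer ℝ n).eval (a + 2)) * h₁ -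
      (a * (ascPochhammer ℝ n).eval (a + 1)) * h₂
  refine le_of_mul_le_mul_right ?_ (by positivity : (0 : ℝ) < a + n)
  rw [key]
  gcongr
  linarith

noncomputable def hypergeometric0F1 (b y : ℝ) : ℝ :=
  ∑' n : ℕ, ((n ! : ℝ) * (ascPochhammer ℝ n).eval b)⁻¹ * y ^ n

theorem summable_norm_hypergeometric0F1_term {b : ℝ} (hb : 0 < b) (y : ℝ) :
    Summable fun n : ℕ => ‖((n ! : ℝ) * (ascPochhammer ℝ n).eval b)⁻¹ * y ^ n‖ := by
  refine .of_nonneg_of_le (fun _ => norm_nonneg _) (fun n => ?_)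
    ((Real.summable_pow_div_factorial |y|).mul_left (min b 1)⁻¹)
  have hfac : (0 : ℝ) < n ! := mod_cast n.factorial_pos
  have hP := ascPochhammer_pos n b hb
  have hcoeff : ((n ! : ℝ) * (ascPochhammer ℝ n).eval b)⁻¹ ≤ (min b 1)⁻¹ * (n ! : ℝ)⁻¹ := by
    rw [mul_inv, mul_comm]
    gcongr
    exact min_one_le_ascPochhammer_eval hb n
  calc ‖((n ! : ℝ) * (ascPochhammer ℝ n).eval b)⁻¹ * y ^ n‖
      = ((n ! : ℝ) * (ascPochhammer ℝ n).eval b)⁻¹ * |y| ^ n := by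
        rw [norm_mul, norm_pow, Real.norm_eq_abs, Real.norm_eq_abs, abs_of_pos (by positivity)]
    _ ≤ (min b 1)⁻¹ * (n ! : ℝ)⁻¹ * |y| ^ n := by gcongr
    _ = (min b 1)⁻¹ * (|y| ^ n / n !) := by ring

theorem hasSum_hypergeometric0F1_mul {a b : ℝ} (ha : 0 < a) (hb : 0 < b) (y : ℝ) :
    HasSum (fun n : ℕ => (ascPochhammer ℝ n).eval (a + b + n - 1) /
        (n ! * (ascPochhammer ℝ n).eval a * (ascPochhammer ℝ n).eval b) * y ^ n)
      (hypergeometric0F1 a y * hypergeometric0F1 b y) := by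
  have hf := summable_norm_hypergeometric0F1_term ha y
  have hg := summable_norm_hypergeometric0F1_term hb y
  have cauchy : (fun n : ℕ => (ascPochhammer ℝ n).eval (a + b + n - 1) /
      (n ! * (ascPochhammer ℝ n).eval a * (ascPochhammer ℝ n).eval b) * y ^ n) =
      fun n => ∑ kl ∈ antidiagonal n, ((kl.1 ! : ℝ) * (ascPochhammer ℝ kl.1).eval a)⁻¹ *
        y ^ kl.1 * (((kl.2 ! : ℝ) * (ascPochhammer ℝ kl.2).eval b)⁻¹ * y ^ kl.2) := by
    ext n
    rw [← sum_antidiagonal_inv_factorial_mul_ascPochhammer ha hb, sum_mul]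
    refine sum_congr rfl fun kl hkl => ?_
    rw [← mem_antidiagonal.mp hkl, pow_add]
    ring
  rw [cauchy, hypergeometric0F1, hypergeometric0F1,
    tsum_mul_tsum_eq_tsum_sum_antidiagonal_of_summable_norm hf hg]
  exact (summable_norm_sum_mul_antidiagonal_of_summable_norm hf hg).of_norm.hasSum

theorem hypergeometric0F1_mul_lt {a : ℝ} (ha : 0 < a) {y : ℝ} (hy : 0 ≤ y) :
    hypergeometric0F1 a y * hypergeometric0F1 (a + 2) y <
      (a + 1) / a * hypergeometric0F1 (a + 1) y ^ 2 := by
  rw [sq]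
  have hsum₁ := hasSum_hypergeometric0F1_mul ha (by positivity : 0 < a + 2) y
  have hsum₂ := (hasSum_hypergeometric0F1_mul (a := a + 1) (b := a + 1) (by positivity)
    (by positivity) y).mul_left ((a + 1) / a)
  refine hasSum_lt (i := 0) (fun n => ?_) ?_ hsum₁ hsum₂
  · rw [show a + (a + 2) + n - 1 = a + 1 + (a + 1) + n - 1 by ring]
    have hP : 0 < (ascPochhammer ℝ n).eval (a + 1 + (a + 1) + n - 1) :=
      ascPochhammer_pos n _ (by linarith [n.cast_nonneg (α := ℝ)])
    have hfac : (0 : ℝ) < n ! := mod_cast n.factorial_pos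
    have := ascPochhammer_pos n a ha
    have := ascPochhammer_pos n (a + 1) (by positivity)
    have := ascPochhammer_pos n (a + 2) (by positivity)
    rw [← mul_assoc]
    refine mul_le_mul_of_nonneg_right ?_ (pow_nonneg hy n)
    rw [div_mul_div_comm, div_le_div_iff₀ (by positivity) (by positivity)]
    linear_combination (n ! * (ascPochhammer ℝ n).eval (a + 1 + (a + 1) + n - 1)) *
      ascPochhammer_eval_turan ha n
  · simp [one_lt_div ha]

theorem besselINorm_eq_hypergeometric0F1 {ν : ℝ} (hν : -1 < ν) (x : ℝ) :
    besselINorm ν x = hypergeometric0F1 (ν + 1) (x ^ 2 / 4) := by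
  refine tsum_congr fun n => ?_
  rw [show ν + n + 1 = ν + 1 + n by ring,
    Real.Gamma_add_nat_div_Gamma_eq (fun k => by linarith [k.cast_nonneg (α := ℝ)]), pow_mul]
  ring

theorem turan_besselI_general (ν : ℝ) (hν : ν > -1) (x : ℝ) :
    besselINorm ν x * besselINorm (ν + 2) x <
      ((ν + 2) / (ν + 1)) * besselINorm (ν + 1) x ^ 2 := by
  have h := hypergeometric0F1_mul_lt (by linarith : 0 < ν + 1) (by positivity : 0 ≤ x ^ 2 / 4)
  rw [besselINorm_eq_hypergeometric0F1 hν, besselINorm_eq_hypergeometric0F1 (by linarith),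
    besselINorm_eq_hypergeometric0F1 (by linarith)]
  convert h using 3 <;> ring

theorem turan_besselI (ν : ℝ) (hν : ν > -1) (x : ℝ) (hx : x ≠ 0) :
    besselINorm ν x * besselINorm (ν + 2) x <
      ((ν + 2) / (ν + 1)) * besselINorm (ν + 1) x ^ 2 :=
  turan_besselI_general ν hν x
end

section
/- Let a_n and b_n (n = 0, 1, 2, ...) be real numbers with b_n > 0 for all n, and suppose the power series A(x) = Σ a_n xⁿ and B(x) = Σ b_n xⁿ converge for |x| < R. If the sequence a_n/b_n is strictly increasing, then the function x ↦ A(x)/B(x) is strictly increasing on (0, R). -/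
/-!
For `0 < x < y` the difference `A(y)B(x) - A(x)B(y)` is the absolutely convergent double series
`∑_{m,n} a_m b_n (y^m x^n - x^m y^n)`. Pairing the `(m, n)` term with the `(n, m)` term gives
`(a_m b_n - a_n b_m)(y^m x^n - y^n x^m)`, whose two factors both have the sign of `m - n` because
`a_n / b_n` and `y^n / x^n` increase in `n`. So every pair contributes a nonnegative amount, and
the pair `{0, 1}` a positive one.
-/

theorem HasSum.pos_of_add_swap {ι α : Type*} [AddCommGroup α] [LinearOrder α]
    [IsOrderedAddMonoid α] [TopologicalSpace α] [IsTopologicalAddGroup α] [OrderClosedTopology α]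
    {f : ι × ι → α} {s : α} (hf : HasSum f s) (hnonneg : ∀ p : ι × ι, 0 ≤ f p + f p.swap)
    {p₀ : ι × ι} (hp₀ : 0 < f p₀ + f p₀.swap) : 0 < s := by
  have hswap : HasSum (fun p : ι × ι => f p.swap) s := (Equiv.prodComm ι ι).hasSum_iff.2 hf
  have hdouble : 0 < s + s := hasSum_lt hnonneg hp₀ hasSum_zero (hf.add hswap)
  by_contra! hs
  exact hdouble.not_ge (add_nonpos hs hs)

theorem hasSum_mul_of_summable {ι κ R : Type*} [NormedRing R] [NormedSpace ℝ R]
    [FiniteDimensional ℝ R] {f : ι → R} {g : κ → R} (hf : Summable f) (hg : Summable g) :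
    HasSum (fun p : ι × κ => f p.1 * g p.2) ((∑' i, f i) * ∑' j, g j) :=
  have : CompleteSpace R := FiniteDimensional.complete ℝ R
  hf.hasSum.mul hg.hasSum
    (summable_mul_of_summable_norm (summable_norm_iff.2 hf) (summable_norm_iff.2 hg))

theorem mul_lt_mul_of_strictMono_div {ι : Type*} [Preorder ι] {a b : ι → ℝ}
    (hb : ∀ i, 0 < b i) (hab : StrictMono fun i => a i / b i) {i j : ι} (hij : i < j) :
    a i * b j < a j * b i :=
  (div_lt_div_iff₀ (hb i) (hb j)).1 (hab hij)

theorem strictMono_pow_div_pow {x y : ℝ} (hx : 0 < x) (hxy : x < y) :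
    StrictMono fun n : ℕ => y ^ n / x ^ n := by
  simpa only [div_pow] using pow_right_strictMono₀ ((one_lt_div hx).2 hxy)

section CrossProduct

variable {ι : Type*} [LinearOrder ι] {a b c d : ι → ℝ}

theorem cross_mul_cross_pos (hb : ∀ i, 0 < b i) (hd : ∀ i, 0 < d i)
    (hab : StrictMono fun i => a i / b i) (hcd : StrictMono fun i => c i / d i) {i j : ι}
    (hij : i ≠ j) : 0 < (a i * b j - a j * b i) * (c i * d j - c j * d i) := by
  rcases hij.lt_or_gt with h | h
  · exact mul_pos_of_neg_of_neg (sub_neg.2 (mul_lt_mul_of_strictMono_div hb hab h))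
      (sub_neg.2 (mul_lt_mul_of_strictMono_div hd hcd h))
  · exact mul_pos (sub_pos.2 (mul_lt_mul_of_strictMono_div hb hab h))
      (sub_pos.2 (mul_lt_mul_of_strictMono_div hd hcd h))

theorem cross_mul_cross_nonneg (hb : ∀ i, 0 < b i) (hd : ∀ i, 0 < d i)
    (hab : StrictMono fun i => a i / b i) (hcd : StrictMono fun i => c i / d i) (i j : ι) :
    0 ≤ (a i * b j - a j * b i) * (c i * d j - c j * d i) := by
  rcases eq_or_ne i j with rfl | hij
  · simp
  · exact (cross_mul_cross_pos hb hd hab hcd hij).le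

end CrossProduct

theorem monotone_ratio_power_series_general (a b : ℕ → ℝ) (R : ℝ)
    (hb : ∀ n, 0 < b n)
    (hA : ∀ x : ℝ, |x| < R → Summable (fun n => a n * x^n))
    (hB : ∀ x : ℝ, |x| < R → Summable (fun n => b n * x^n))
    (hmono : StrictMono (fun n => a n / b n)) :
    StrictMonoOn (fun x => (∑' n : ℕ, a n * x^n) / (∑' n : ℕ, b n * x^n))
      (Set.Ioo 0 R) := by
  rintro x ⟨hx0, hxR⟩ y ⟨hy0, hyR⟩ hxy
  rw [← abs_of_pos hx0] at hxR
  rw [← abs_of_pos hy0] at hyR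
  have hBpos : ∀ z, 0 < z → |z| < R → 0 < ∑' n, b n * z ^ n := fun z hz hzR =>
    (hB z hzR).tsum_pos (fun n => (mul_pos (hb n) (pow_pos hz n)).le) 0 (by simpa using hb 0)
  have hcross := (hasSum_mul_of_summable (hA y hyR) (hB x hxR)).sub
    (hasSum_mul_of_summable (hA x hxR) (hB y hyR))
  have hpair : ∀ p : ℕ × ℕ,
      a p.1 * y ^ p.1 * (b p.2 * x ^ p.2) - a p.1 * x ^ p.1 * (b p.2 * y ^ p.2)
        + (a p.2 * y ^ p.2 * (b p.1 * x ^ p.1) - a p.2 * x ^ p.2 * (b p.1 * y ^ p.1))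
      = (a p.1 * b p.2 - a p.2 * b p.1) * (y ^ p.1 * x ^ p.2 - y ^ p.2 * x ^ p.1) :=
    fun p => by ring
  have hpowers := strictMono_pow_div_pow hx0 hxy
  have hdiff := hcross.pos_of_add_swap (p₀ := (0, 1))
    (fun p => (hpair p).symm ▸ cross_mul_cross_nonneg hb (pow_pos hx0) hmono hpowers p.1 p.2)
    ((hpair _).symm ▸ cross_mul_cross_pos hb (pow_pos hx0) hmono hpowers zero_ne_one)
  rw [div_lt_div_iff₀ (hBpos x hx0 hxR) (hBpos y hy0 hyR)]
  linarith

theorem monotone_ratio_power_series (a b : ℕ → ℝ) (R : ℝ) (hR : 0 < R)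
    (hb : ∀ n, 0 < b n)
    (hA : ∀ x : ℝ, |x| < R → Summable (fun n => a n * x^n))
    (hB : ∀ x : ℝ, |x| < R → Summable (fun n => b n * x^n))
    (hmono : StrictMono (fun n => a n / b n)) :
    StrictMonoOn (fun x => (∑' n : ℕ, a n * x^n) / (∑' n : ℕ, b n * x^n))
      (Set.Ioo 0 R) :=
  monotone_ratio_power_series_general a b R hb hA hB hmono
end

section
/- Let f, g : [a, b] → ℝ be continuous on [a, b] and differentiable on (a, b), with g′(x) ≠ 0 for all x in (a, b). If f′/g′ is increasing on (a, b), then both x ↦ (f(x) − f(a))/(g(x) − g(a)) and x ↦ (f(x) − f(b))/(g(x) − g(b)) are increasing on (a, b). -/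
open Set

private lemma mediant_aux (A B C D : ℝ) (hB : 0 < B) (hD : 0 < D) (h : A / B ≤ C / D) :
    A / B ≤ (A + C) / (B + D) ∧ (A + C) / (B + D) ≤ C / D := by
  rw [div_le_div_iff₀ hB hD] at h
  constructor
  · rw [div_le_div_iff₀ hB (by linarith)]; nlinarith
  · rw [div_le_div_iff₀ (by linarith) hD]; nlinarith

private theorem monotone_lhospital_aux (a b : ℝ) (hab : a < b) (f g f' g' : ℝ → ℝ)
    (hf : ContinuousOn f (Set.Icc a b)) (hg : ContinuousOn g (Set.Icc a b))
    (hfd : ∀ x ∈ Set.Ioo a b, HasDerivAt f (f' x) x)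
    (hgd : ∀ x ∈ Set.Ioo a b, HasDerivAt g (g' x) x)
    (hg' : ∀ x ∈ Set.Ioo a b, 0 < g' x)
    (hmono : MonotoneOn (fun x => f' x / g' x) (Set.Ioo a b)) :
    MonotoneOn (fun x => (f x - f a) / (g x - g a)) (Set.Ioo a b) ∧
    MonotoneOn (fun x => (f x - f b) / (g x - g b)) (Set.Ioo a b) := by
  have hsub : ∀ x y : ℝ, a ≤ x → y ≤ b → Set.Ioo x y ⊆ Set.Ioo a b := fun x y hx hy =>
    Set.Ioo_subset_Ioo hx hy
  have gpos : ∀ x y : ℝ, a ≤ x → x < y → y ≤ b → 0 < g y - g x := by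
    intro x y hax hxy hyb
    obtain ⟨c, hc, hceq⟩ := exists_hasDerivAt_eq_slope g g' hxy
      (hg.mono (Set.Icc_subset_Icc hax hyb))
      (fun z hz => hgd z (hsub x y hax hyb hz))
    have h1 : 0 < g' c := hg' c (hsub x y hax hyb hc)
    rw [hceq] at h1
    have := sub_pos.2 hxy
    calc (0:ℝ) = (g y - g x) / (y - x) * 0 := by ring
    _ < (g y - g x) / (y - x) * (y - x) := by exact mul_lt_mul_of_pos_left this h1
    _ = g y - g x := div_mul_cancel₀ _ (by linarith)
  have slope_eq : ∀ x y : ℝ, a ≤ x → x < y → y ≤ b →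
      ∃ c ∈ Set.Ioo x y, (f y - f x) / (g y - g x) = f' c / g' c := by
    intro x y hax hxy hyb
    obtain ⟨c, hc, hceq⟩ := exists_ratio_hasDerivAt_eq_ratio_slope f f' hxy
      (hf.mono (Set.Icc_subset_Icc hax hyb))
      (fun z hz => hfd z (hsub x y hax hyb hz)) g g'
      (hg.mono (Set.Icc_subset_Icc hax hyb))
      (fun z hz => hgd z (hsub x y hax hyb hz))
    refine ⟨c, hc, ?_⟩
    have h1 : g' c ≠ 0 := ne_of_gt (hg' c (hsub x y hax hyb hc))
    have h2 : g y - g x ≠ 0 := ne_of_gt (gpos x y hax hxy hyb)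
    field_simp
    linarith [hceq]
  constructor
  · intro x hx y hy hxy
    rcases eq_or_lt_of_le hxy with rfl | hlt
    · exact le_refl _
    obtain ⟨c₁, hc₁, he₁⟩ := slope_eq a x le_rfl hx.1 hx.2.le
    obtain ⟨c₂, hc₂, he₂⟩ := slope_eq x y hx.1.le hlt hy.2.le
    have hc₁' : c₁ ∈ Set.Ioo a b := hsub a x le_rfl hx.2.le hc₁
    have hc₂' : c₂ ∈ Set.Ioo a b := hsub x y hx.1.le hy.2.le hc₂
    have hr : (f x - f a) / (g x - g a) ≤ (f y - f x) / (g y - g x) := by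
      rw [he₁, he₂]; exact hmono hc₁' hc₂' (le_of_lt (hc₁.2.trans hc₂.1))
    have hB := gpos a x le_rfl hx.1 hx.2.le
    have hD := gpos x y hx.1.le hlt hy.2.le
    have key := (mediant_aux (f x - f a) (g x - g a) (f y - f x) (g y - g x) hB hD hr).1
    have e1 : f y - f a = (f x - f a) + (f y - f x) := by ring
    have e2 : g y - g a = (g x - g a) + (g y - g x) := by ring
    simp only [e1, e2]
    exact key
  · intro x hx y hy hxy
    rcases eq_or_lt_of_le hxy with rfl | hlt
    · exact le_refl _
    obtain ⟨c₂, hc₂, he₂⟩ := slope_eq x y hx.1.le hlt hy.2.le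
    obtain ⟨c₃, hc₃, he₃⟩ := slope_eq y b hy.1.le hy.2 le_rfl
    have hc₂' : c₂ ∈ Set.Ioo a b := hsub x y hx.1.le hy.2.le hc₂
    have hc₃' : c₃ ∈ Set.Ioo a b := hsub y b hy.1.le le_rfl hc₃
    have hr : (f y - f x) / (g y - g x) ≤ (f b - f y) / (g b - g y) := by
      rw [he₂, he₃]; exact hmono hc₂' hc₃' (le_of_lt (hc₂.2.trans hc₃.1))
    have hB := gpos x y hx.1.le hlt hy.2.le
    have hD := gpos y b hy.1.le hy.2 le_rfl
    have key := (mediant_aux (f y - f x) (g y - g x) (f b - f y) (g b - g y) hB hD hr).2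
    have e1 : f x - f b = -((f y - f x) + (f b - f y)) := by ring
    have e2 : g x - g b = -((g y - g x) + (g b - g y)) := by ring
    have e3 : f y - f b = -(f b - f y) := by ring
    have e4 : g y - g b = -(g b - g y) := by ring
    simp only [e1, e2, e3, e4, neg_div_neg_eq]
    exact key

theorem monotone_lhospital (a b : ℝ) (hab : a < b) (f g f' g' : ℝ → ℝ)
    (hf : ContinuousOn f (Set.Icc a b)) (hg : ContinuousOn g (Set.Icc a b))
    (hfd : ∀ x ∈ Set.Ioo a b, HasDerivAt f (f' x) x)
    (hgd : ∀ x ∈ Set.Ioo a b, HasDerivAt g (g' x) x)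
    (hg' : ∀ x ∈ Set.Ioo a b, g' x ≠ 0)
    (hmono : MonotoneOn (fun x => f' x / g' x) (Set.Ioo a b)) :
    MonotoneOn (fun x => (f x - f a) / (g x - g a)) (Set.Ioo a b) ∧
    MonotoneOn (fun x => (f x - f b) / (g x - g b)) (Set.Ioo a b) := by
  have hdar := hasDerivWithinAt_forall_lt_or_forall_gt_of_forall_ne (convex_Ioo a b)
    (fun x hx => ((hgd x hx).hasDerivWithinAt)) (m := 0) hg'
  rcases hdar with hneg | hpos
  · -- g' < 0: apply aux to -f, -g
    have := monotone_lhospital_aux a b hab (fun x => -f x) (fun x => -g x)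
      (fun x => -f' x) (fun x => -g' x) (hf.neg) (hg.neg)
      (fun x hx => (hfd x hx).neg) (fun x hx => (hgd x hx).neg)
      (fun x hx => neg_pos.2 (hneg x hx))
      (by
        have : (fun x => -f' x / -g' x) = fun x => f' x / g' x := by
          funext x; rw [neg_div_neg_eq]
        rw [this]; exact hmono)
    have e1 : (fun x => (-f x - -f a) / (-g x - -g a)) =
        (fun x => (f x - f a) / (g x - g a)) := by
      funext x
      rw [show -f x - -f a = -(f x - f a) by ring, show -g x - -g a = -(g x - g a) by ring,
        neg_div_neg_eq]
    have e2 : (fun x => (-f x - -f b) / (-g x - -g b)) =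
        (fun x => (f x - f b) / (g x - g b)) := by
      funext x
      rw [show -f x - -f b = -(f x - f b) by ring, show -g x - -g b = -(g x - g b) by ring,
        neg_div_neg_eq]
    rw [e1, e2] at this
    exact this
  · exact monotone_lhospital_aux a b hab f g f' g' hf hg hfd hgd hpos hmono
end

section
/- Let ν > −1 and define the normalized modified Bessel functions I_ν(x) = Σ_{n≥0} (1/4)ⁿ x^{2n} / ((ν+1)_n n!). Then for all x > 0, 1 > (1 − (ν+2)/(ν+1))·I_ν(x) + ((ν+2)/(ν+1))·I_ν(x)/I_{ν+1}(x). -/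
noncomputable def gammaRatio (ν : ℝ) (n : ℕ) : ℝ :=
  Real.Gamma (ν + n + 1) / Real.Gamma (ν + 1)

noncomputable def besselTerm (ν x : ℝ) (n : ℕ) : ℝ :=
  (1/4 : ℝ)^n * x^(2*n) /
    ((Real.Gamma (ν + n + 1) / Real.Gamma (ν + 1)) * n.factorial)

lemma nu_n_pos (ν : ℝ) (hν : ν > -1) (n : ℕ) : (0:ℝ) < ν + n + 1 := by
  have := n.cast_nonneg (α := ℝ)
  linarith

lemma gammaRatio_zero (ν : ℝ) (hν : ν > -1) : gammaRatio ν 0 = 1 := by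
  have : Real.Gamma (ν + 1) ≠ 0 := (Real.Gamma_pos_of_pos (by linarith)).ne'
  simp [gammaRatio, div_self this]

lemma gammaRatio_succ (ν : ℝ) (hν : ν > -1) (n : ℕ) :
    gammaRatio ν (n + 1) = (ν + n + 1) * gammaRatio ν n := by
  have h1 : ν + ((n:ℝ) + 1) + 1 = (ν + n + 1) + 1 := by ring
  unfold gammaRatio
  push_cast
  rw [h1, Real.Gamma_add_one (nu_n_pos ν hν n).ne']
  ring

lemma gammaRatio_pos (ν : ℝ) (hν : ν > -1) (n : ℕ) : 0 < gammaRatio ν n := by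
  induction n with
  | zero => rw [gammaRatio_zero ν hν]; norm_num
  | succ n ih => rw [gammaRatio_succ ν hν]; exact mul_pos (nu_n_pos ν hν n) ih

lemma gammaRatio_ge (ν : ℝ) (hν : ν > -1) (n : ℕ) : min 1 (ν + 1) ≤ gammaRatio ν n := by
  induction n with
  | zero => rw [gammaRatio_zero ν hν]; exact min_le_left _ _
  | succ n ih =>
    rw [gammaRatio_succ ν hν]
    rcases le_or_gt 1 (ν + n + 1) with h | h
    · calc min 1 (ν+1) ≤ gammaRatio ν n := ih
        _ ≤ (ν + n + 1) * gammaRatio ν n :=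
          le_mul_of_one_le_left (gammaRatio_pos ν hν n).le h
    · have hn : (n:ℝ) < 1 := by linarith
      have hn0 : n = 0 := by exact_mod_cast Nat.lt_one_iff.mp (by exact_mod_cast hn)
      subst hn0
      rw [gammaRatio_zero ν hν]
      simpa using min_le_right 1 (ν + 1)

lemma besselTerm_eq (ν x : ℝ) (n : ℕ) :
    besselTerm ν x n = (x^2/4)^n / (gammaRatio ν n * n.factorial) := by
  unfold besselTerm gammaRatio
  rw [pow_mul]
  ring

lemma besselTerm_pos (ν : ℝ) (hν : ν > -1) {x : ℝ} (hx : 0 < x) (n : ℕ) :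
    0 < besselTerm ν x n := by
  rw [besselTerm_eq]
  have := gammaRatio_pos ν hν n
  have := n.factorial_pos
  positivity

lemma besselTerm_nonneg (ν : ℝ) (hν : ν > -1) (x : ℝ) (n : ℕ) :
    0 ≤ besselTerm ν x n := by
  rw [besselTerm_eq]
  have := gammaRatio_pos ν hν n
  have := n.factorial_pos
  positivity

lemma besselTerm_summable (ν : ℝ) (hν : ν > -1) (x : ℝ) :
    Summable (besselTerm ν x) := by
  have hc : 0 < min 1 (ν + 1) := lt_min one_pos (by linarith)
  have hsum : Summable (fun n : ℕ => (min 1 (ν+1))⁻¹ * ((x^2/4)^n / n.factorial)) :=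
    (Real.summable_pow_div_factorial _).mul_left _
  refine hsum.of_nonneg_of_le (besselTerm_nonneg ν hν x) (fun n => ?_)
  rw [besselTerm_eq, inv_mul_eq_div, div_div]
  have hf : (0:ℝ) < n.factorial := by exact_mod_cast n.factorial_pos
  have hmin : (n.factorial:ℝ) * min 1 (ν+1) ≤ gammaRatio ν n * n.factorial := by
    rw [mul_comm]
    exact mul_le_mul_of_nonneg_right (gammaRatio_ge ν hν n) hf.le
  exact div_le_div_of_nonneg_left (by positivity) (mul_pos hf hc) hmin

lemma besselTerm_zero (ν x : ℝ) (hν : ν > -1) : besselTerm ν x 0 = 1 := by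
  rw [besselTerm_eq, gammaRatio_zero ν hν]
  simp

lemma besselTerm_succ (ν : ℝ) (hν : ν > -1) (x : ℝ) (n : ℕ) :
    besselTerm ν x (n+1) = (x^2/4) / ((ν + n + 1) * (n + 1)) * besselTerm ν x n := by
  rw [besselTerm_eq, besselTerm_eq, gammaRatio_succ ν hν, Nat.factorial_succ, pow_succ]
  have h1 : (0:ℝ) < ν + n + 1 := nu_n_pos ν hν n
  have h2 : (0:ℝ) < gammaRatio ν n := gammaRatio_pos ν hν n
  have h3 : (0:ℝ) < n.factorial := by exact_mod_cast n.factorial_pos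
  push_cast
  field_simp

lemma besselTerm_cross (ν : ℝ) (hν : ν > -1) (x : ℝ) (n : ℕ) :
    (ν + 1) * besselTerm ν x n = (ν + n + 1) * besselTerm (ν+1) x n := by
  have hne : ν + 1 ≠ 0 := (show (0:ℝ) < ν + 1 by linarith).ne'
  have hΓ : Real.Gamma (ν + 1) ≠ 0 := (Real.Gamma_pos_of_pos (by linarith)).ne'
  have hg : gammaRatio (ν+1) n * (ν + 1) = (ν + n + 1) * gammaRatio ν n := by
    unfold gammaRatio
    have e1 : ν + 1 + (n:ℝ) + 1 = (ν + n + 1) + 1 := by ring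
    have e2 : ν + 1 + (1:ℝ) = (ν + 1) + 1 := by ring
    rw [e1, e2, Real.Gamma_add_one (nu_n_pos ν hν n).ne', Real.Gamma_add_one hne]
    field_simp
  rw [besselTerm_eq, besselTerm_eq]
  have h2 : (0:ℝ) < gammaRatio ν n := gammaRatio_pos ν hν n
  have h2' : (0:ℝ) < gammaRatio (ν+1) n := gammaRatio_pos (ν+1) (by linarith) n
  have h3 : (0:ℝ) < n.factorial := by exact_mod_cast n.factorial_pos
  rw [mul_div_assoc', mul_div_assoc',
    div_eq_div_iff (mul_pos h2 h3).ne' (mul_pos h2' h3).ne']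
  linear_combination ((x^2/4)^n * (n.factorial:ℝ)) * hg

theorem huygens_besselI (ν : ℝ) (hν : ν > -1) (x : ℝ) (hx : 0 < x) :
    1 > (1 - (ν + 2) / (ν + 1)) * besselINorm ν x +
      ((ν + 2) / (ν + 1)) * (besselINorm ν x / besselINorm (ν + 1) x) := by
  have hν1 : ν + 1 > -1 := by linarith
  have hu : besselINorm ν x = ∑' n, besselTerm ν x n := rfl
  have hv : besselINorm (ν+1) x = ∑' n, besselTerm (ν+1) x n := rfl
  set u := besselINorm ν x with hu'
  set v := besselINorm (ν+1) x with hv'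
  have hsu : Summable (besselTerm ν x) := besselTerm_summable ν hν x
  have hsv : Summable (besselTerm (ν+1) x) := besselTerm_summable _ hν1 x
  have hle : ∀ n, besselTerm (ν+1) x n ≤ besselTerm ν x n := by
    intro n
    have hc := besselTerm_cross ν hν x n
    have hp := besselTerm_nonneg (ν+1) hν1 x n
    have hn := n.cast_nonneg (α := ℝ)
    nlinarith [mul_nonneg hn hp]
  have huv : v ≤ u := by
    rw [hu, hv]; exact Summable.tsum_le_tsum hle hsv hsu
  have hdiff : ∀ n : ℕ, (ν+1) * (besselTerm ν x n - besselTerm (ν+1) x n)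
      = (n:ℝ) * besselTerm (ν+1) x n := by
    intro n
    linear_combination besselTerm_cross ν hν x n
  have hw : (ν+1) * (u - v) = ∑' n : ℕ, (n:ℝ) * besselTerm (ν+1) x n := by
    rw [hu, hv, ← Summable.tsum_sub hsu hsv, ← tsum_mul_left]
    exact tsum_congr hdiff
  have hg_sum : Summable (fun n : ℕ => (n:ℝ) * besselTerm (ν+1) x n) := by
    have he : (fun n : ℕ => (n:ℝ) * besselTerm (ν+1) x n)
        = fun n => (ν+1) * (besselTerm ν x n - besselTerm (ν+1) x n) :=
      funext fun n => (hdiff n).symm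
    rw [he]
    exact ((hsu.sub hsv).mul_left _)
  have hterm : ∀ n : ℕ, ((n:ℝ)+1) * besselTerm (ν+1) x (n+1)
      ≤ (x^2/4)/(ν+2) * besselTerm (ν+1) x n := by
    intro n
    rw [besselTerm_succ _ hν1, ← mul_assoc]
    have hn := n.cast_nonneg (α := ℝ)
    have h1 : (0:ℝ) < ν + 1 + n + 1 := by linarith
    have hp := besselTerm_nonneg (ν+1) hν1 x n
    refine mul_le_mul_of_nonneg_right ?_ hp
    rw [← mul_div_assoc, div_le_div_iff₀ (mul_pos h1 (by linarith)) (by linarith)]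
    have hx2 : (0:ℝ) ≤ x^2/4 := by positivity
    nlinarith [mul_nonneg (mul_nonneg hx2 hn) hn, mul_nonneg hx2 hn]
  have hshift_sum : Summable (fun n : ℕ => ((n:ℝ)+1) * besselTerm (ν+1) x (n+1)) := by
    have h := (summable_nat_add_iff 1).mpr hg_sum
    refine h.congr fun n => ?_
    push_cast
    ring
  have h2 : ∑' n : ℕ, ((n+1:ℕ):ℝ) * besselTerm (ν+1) x (n+1)
      ≤ ∑' n : ℕ, (x^2/4)/(ν+2) * besselTerm (ν+1) x n := by
    refine Summable.tsum_le_tsum (fun n => ?_) ?_ (hsv.mul_left _)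
    · push_cast
      exact hterm n
    · exact hshift_sum.congr fun n => by push_cast; ring
  have hbound : (ν+1) * (u - v) ≤ (x^2/4)/(ν+2) * v := by
    rw [hw, Summable.tsum_eq_zero_add hg_sum]
    simp only [Nat.cast_zero, zero_mul, zero_add]
    rw [tsum_mul_left] at h2
    rw [hv]
    exact h2
  have ht1 : besselTerm (ν+1) x 1 = (x^2/4)/(ν+2) := by
    have h := besselTerm_succ (ν+1) hν1 x 0
    rw [besselTerm_zero _ x hν1] at h
    norm_num at h
    rw [h]
    ring_nf
  have ht1p : 0 < besselTerm (ν+1) x 1 := besselTerm_pos _ hν1 hx 1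
  have ht2p : 0 < besselTerm (ν+1) x 2 := besselTerm_pos _ hν1 hx 2
  have hv_lb : 1 + besselTerm (ν+1) x 1 + besselTerm (ν+1) x 2 ≤ v := by
    have h := Summable.sum_le_tsum (Finset.range 3)
      (fun i _ => besselTerm_nonneg _ hν1 x i) hsv
    rw [← hv] at h
    simp only [Finset.sum_range_succ, Finset.sum_range_zero, zero_add] at h
    rw [besselTerm_zero _ x hν1] at h
    linarith
  have hv1 : 1 < v := by linarith
  have hv0 : 0 < v := by linarith
  have hA : (ν+1) * (u - v) ≤ besselTerm (ν+1) x 1 * v := by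
    rw [ht1]; linarith [hbound]
  have key : 0 < (ν+1)*v + u*v - (ν+2)*u := by
    nlinarith [mul_nonneg (sub_nonneg.2 huv) (by linarith : (0:ℝ) ≤ v - 1),
      mul_le_mul_of_nonneg_left hv_lb hv0.le, mul_pos hv0 ht2p]
  rw [gt_iff_lt, ← sub_pos]
  have hne : ν + 1 ≠ 0 := (show (0:ℝ) < ν + 1 by linarith).ne'
  have heq : 1 - ((1 - (ν+2)/(ν+1)) * u + ((ν+2)/(ν+1)) * (u/v))
      = ((ν+1)*v + u*v - (ν+2)*u) / ((ν+1)*v) := by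
    field_simp
    ring
  rw [heq]
  exact div_pos key (mul_pos (by linarith) hv0)
end

section
/- Let ν > −1 and define I_ν(x) = Σ_{n≥0} (1/4)ⁿ x^{2n} / ((ν+1)_n n!). Then the function x ↦ ((ν+1)·I_ν(x)·I_{ν+2}(x)) / ((ν+2)·I_{ν+1}(x)²) is increasing on (0, ∞). -/
open Finset Polynomial
open scoped Nat

theorem ascPochhammer_eval_add {R : Type*} [CommSemiring R] (a : R) (m n : ℕ) :
    (ascPochhammer R (m + n)).eval a =
      (ascPochhammer R m).eval a * (ascPochhammer R n).eval (a + m) := by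
  rw [← ascPochhammer_mul, eval_mul, eval_comp, eval_add, eval_X, eval_natCast]

/-- Chu–Vandermonde for falling factorials, rewritten with rising factorials via
`x (x - 1) ⋯ (x - k + 1) = (x - k + 1)_k`. -/
theorem sum_antidiagonal_choose_mul_ascPochhammer_eval {R : Type*} [CommRing R] (a b : R)
    (n : ℕ) :
    ∑ ij ∈ antidiagonal n, (n.choose ij.1 : R) * ((ascPochhammer R ij.2).eval (a + ij.1) *
      (ascPochhammer R ij.1).eval (b + ij.2)) = (ascPochhammer R n).eval (a + b + n - 1) := by
  have h := Ring.descPochhammer_smeval_add (r := b + n - 1) (s := a + n - 1) n (Commute.all _ _)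
  simp only [descPochhammer_smeval_eq_ascPochhammer, ascPochhammer_smeval_eq_eval] at h
  rw [show b + n - 1 + (a + n - 1) - n + 1 = a + b + n - 1 by ring] at h
  rw [h]
  refine sum_congr rfl fun ⟨i, j⟩ hij => ?_
  rw [HasAntidiagonal.mem_antidiagonal] at hij
  subst hij
  push_cast
  rw [mul_comm ((ascPochhammer R j).eval _)]
  congr 3 <;> ring

theorem Real.Gamma_add_nat_div_Gamma_eq_s19 {x : ℝ} (hx : ∀ k : ℕ, x ≠ -k) (n : ℕ) :
    Real.Gamma (x + n) / Real.Gamma x = (ascPochhammer ℝ n).eval x := by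
  have hx' : ∀ k : ℕ, x + k ≠ 0 := fun k h => hx k (by linarith)
  induction n with
  | zero => simpa using Real.Gamma_ne_zero hx
  | succ n ih =>
    rw [Nat.cast_succ, ← add_assoc, Real.Gamma_add_one (hx' n), ascPochhammer_succ_eval, ← ih]
    ring

theorem pow_mul_pow_le_pow_mul_pow {R : Type*} [CommSemiring R] [PartialOrder R]
    [IsOrderedRing R] {s t : R} (hs : 0 ≤ s) (hst : s ≤ t) {m n : ℕ} (hmn : m ≤ n) :
    t ^ m * s ^ n ≤ t ^ n * s ^ m := by
  obtain ⟨k, rfl⟩ := Nat.exists_eq_add_of_le hmn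
  calc t ^ m * s ^ (m + k) = t ^ m * s ^ m * s ^ k := by ring
    _ ≤ t ^ m * s ^ m * t ^ k :=
      mul_le_mul_of_nonneg_left (pow_le_pow_left₀ hs hst k)
        (mul_nonneg (pow_nonneg (hs.trans hst) m) (pow_nonneg hs m))
    _ = t ^ (m + k) * s ^ m := by ring

theorem tsum_nonneg_of_add_swap_nonneg {α : Type*} {f : α × α → ℝ} (hf : Summable f)
    (h : ∀ p : α × α, 0 ≤ f p + f p.swap) : 0 ≤ ∑' p, f p := by
  have hswap : ∑' p : α × α, f p.swap = ∑' p, f p := (Equiv.prodComm α α).tsum_eq f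
  have hf' : Summable fun p : α × α => f p.swap := (Equiv.prodComm α α).summable_iff.mpr hf
  have hsum : 0 ≤ ∑' p, (f p + f p.swap) := tsum_nonneg h
  rw [hf.tsum_add hf', hswap] at hsum
  linarith

theorem tsum_mul_pow_mul_tsum_mul_pow_le {a b : ℕ → ℝ} (hb : ∀ n, 0 < b n)
    (hab : Monotone fun n => a n / b n) {s t : ℝ} (hs : 0 ≤ s) (hst : s ≤ t)
    (has : Summable fun n => a n * s ^ n) (hat : Summable fun n => a n * t ^ n)
    (hbs : Summable fun n => b n * s ^ n) (hbt : Summable fun n => b n * t ^ n) :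
    (∑' n, a n * s ^ n) * (∑' n, b n * t ^ n) ≤ (∑' n, a n * t ^ n) * (∑' n, b n * s ^ n) := by
  replace has := summable_norm_iff.mpr has
  replace hat := summable_norm_iff.mpr hat
  replace hbs := summable_norm_iff.mpr hbs
  replace hbt := summable_norm_iff.mpr hbt
  have hcross {m n : ℕ} (hmn : m ≤ n) : a m * b n ≤ a n * b m :=
    (div_le_div_iff₀ (hb m) (hb n)).mp (hab hmn)
  rw [← sub_nonneg, mul_comm (∑' n, a n * s ^ n), tsum_mul_tsum_of_summable_norm hat hbs,
    tsum_mul_tsum_of_summable_norm hbt has, ← (summable_mul_of_summable_norm hat hbs).tsum_sub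
      (summable_mul_of_summable_norm hbt has)]
  refine tsum_nonneg_of_add_swap_nonneg ((summable_mul_of_summable_norm hat hbs).sub
    (summable_mul_of_summable_norm hbt has)) fun ⟨m, n⟩ => ?_
  -- both factors change sign with `m - n`
  have hfactor : a m * t ^ m * (b n * s ^ n) - b m * t ^ m * (a n * s ^ n) +
      (a n * t ^ n * (b m * s ^ m) - b n * t ^ n * (a m * s ^ m)) =
      (a m * b n - a n * b m) * (t ^ m * s ^ n - t ^ n * s ^ m) := by ring
  simp only [Prod.swap, hfactor]
  rcases le_total m n with hmn | hnm
  · exact mul_nonneg_of_nonpos_of_nonpos (by linarith [hcross hmn])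
      (by linarith [pow_mul_pow_le_pow_mul_pow hs hst hmn])
  · exact mul_nonneg (by linarith [hcross hnm])
      (by linarith [pow_mul_pow_le_pow_mul_pow hs hst hnm])

theorem monotoneOn_tsum_mul_pow_div_tsum_mul_pow {a b : ℕ → ℝ} (hb : ∀ n, 0 < b n)
    (hab : Monotone fun n => a n / b n) (hsa : ∀ y ≥ 0, Summable fun n => a n * y ^ n)
    (hsb : ∀ y ≥ 0, Summable fun n => b n * y ^ n) :
    MonotoneOn (fun y => (∑' n, a n * y ^ n) / ∑' n, b n * y ^ n) (Set.Ici 0) := by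
  have hpos (y : ℝ) (hy : 0 ≤ y) : 0 < ∑' n, b n * y ^ n :=
    (hsb y hy).tsum_pos (fun n => mul_nonneg (hb n).le (pow_nonneg hy n)) 0 (by simpa using hb 0)
  intro s hs t ht hst
  rw [div_le_div_iff₀ (hpos s hs) (hpos t ht)]
  exact tsum_mul_pow_mul_tsum_mul_pow_le hb hab hs hst (hsa s hs) (hsa t ht) (hsb s hs)
    (hsb t ht)

noncomputable def besselCoeff (μ : ℝ) (n : ℕ) : ℝ :=
  ((ascPochhammer ℝ n).eval (μ + 1) * n !)⁻¹

theorem besselCoeff_pos {μ : ℝ} (hμ : -1 < μ) (n : ℕ) : 0 < besselCoeff μ n := by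
  have := ascPochhammer_pos n (μ + 1) (by linarith)
  unfold besselCoeff
  positivity

theorem besselCoeff_succ (μ : ℝ) (n : ℕ) :
    besselCoeff μ (n + 1) = besselCoeff μ n / ((μ + 1 + n) * (n + 1)) := by
  simp only [besselCoeff, ascPochhammer_succ_eval, Nat.factorial_succ]
  push_cast
  rw [div_eq_mul_inv, ← mul_inv]
  ring_nf

theorem summable_besselCoeff_mul_pow (μ y : ℝ) :
    Summable fun n => besselCoeff μ n * y ^ n := by
  refine summable_of_ratio_norm_eventually_le (r := 1 / 2) (by norm_num) ?_
  obtain ⟨N, hN⟩ := exists_nat_ge (2 * |y| + |μ|)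
  filter_upwards [Filter.eventually_ge_atTop N] with n hn
  have hn : 2 * |y| + |μ| ≤ n := hN.trans (by exact_mod_cast hn)
  have hμn : 2 * |y| + 1 ≤ μ + 1 + n := by linarith [neg_abs_le μ]
  have hD : 2 * |y| + 1 ≤ (μ + 1 + n) * (n + 1) := by
    nlinarith [abs_nonneg y, (n.cast_nonneg : (0 : ℝ) ≤ n)]
  have hratio : ‖y / ((μ + 1 + n) * (n + 1))‖ ≤ 1 / 2 := by
    rw [norm_div, Real.norm_eq_abs, Real.norm_of_nonneg (by linarith [abs_nonneg y]),
      div_le_iff₀ (by linarith [abs_nonneg y])]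
    linarith
  calc ‖besselCoeff μ (n + 1) * y ^ (n + 1)‖
      = ‖besselCoeff μ n * y ^ n‖ * ‖y / ((μ + 1 + n) * (n + 1))‖ := by
        rw [besselCoeff_succ, pow_succ, ← norm_mul]; ring_nf
    _ ≤ 1 / 2 * ‖besselCoeff μ n * y ^ n‖ := by
        rw [mul_comm (1 / 2 : ℝ)]; gcongr

theorem hasSum_besselINorm {μ : ℝ} (hμ : -1 < μ) (x : ℝ) :
    HasSum (fun n => besselCoeff μ n * (x ^ 2 / 4) ^ n) (besselINorm μ x) := by
  have hΓ (n : ℕ) :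
      Real.Gamma (μ + n + 1) / Real.Gamma (μ + 1) = (ascPochhammer ℝ n).eval (μ + 1) := by
    rw [← Real.Gamma_add_nat_div_Gamma_eq_s19 (fun k h => by linarith [k.cast_nonneg' (α := ℝ)]),
      add_right_comm]
  convert (summable_besselCoeff_mul_pow μ (x ^ 2 / 4)).hasSum using 1
  refine tsum_congr fun n => ?_
  rw [hΓ, besselCoeff, div_pow, div_pow, one_pow, pow_mul]
  ring

theorem besselCoeff_eq_mul_besselCoeff_add {μ : ℝ} (hμ : -1 < μ) (i j : ℕ) :
    besselCoeff μ i =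
      (i + j)! / i ! * (ascPochhammer ℝ j).eval (μ + 1 + i) * besselCoeff μ (i + j) := by
  have h₁ := ascPochhammer_pos i (μ + 1) (by linarith)
  have h₂ := ascPochhammer_pos j (μ + 1 + i) (by linarith [i.cast_nonneg' (α := ℝ)])
  rw [besselCoeff, besselCoeff, ascPochhammer_eval_add]
  field_simp

theorem add_mul_besselCoeff_add_one {μ : ℝ} (hμ : -1 < μ) (n : ℕ) :
    (μ + 1 + n) * besselCoeff (μ + 1) n = (μ + 1) * besselCoeff μ n := by
  have h₁ := ascPochhammer_pos n (μ + 1) (by linarith)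
  have h₂ := ascPochhammer_pos n (μ + 1 + 1) (by linarith)
  have h := ascPochhammer_eval_add (μ + 1) 1 n
  rw [add_comm 1 n, ascPochhammer_succ_eval, ascPochhammer_one, eval_X, Nat.cast_one] at h
  rw [besselCoeff, besselCoeff]
  field_simp
  linear_combination h

noncomputable def besselProdCoeff (μ σ : ℝ) (n : ℕ) : ℝ :=
  ∑ ij ∈ antidiagonal n, besselCoeff μ ij.1 * besselCoeff σ ij.2

theorem besselProdCoeff_pos {μ σ : ℝ} (hμ : -1 < μ) (hσ : -1 < σ) (n : ℕ) :
    0 < besselProdCoeff μ σ n :=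
  sum_pos (fun ij _ => mul_pos (besselCoeff_pos hμ ij.1) (besselCoeff_pos hσ ij.2))
    ⟨(0, n), by simp⟩

theorem besselProdCoeff_mul_pow (μ σ y : ℝ) (n : ℕ) :
    besselProdCoeff μ σ n * y ^ n =
      ∑ ij ∈ antidiagonal n, besselCoeff μ ij.1 * y ^ ij.1 * (besselCoeff σ ij.2 * y ^ ij.2) := by
  rw [besselProdCoeff, sum_mul]
  refine sum_congr rfl fun ij hij => ?_
  rw [← HasAntidiagonal.mem_antidiagonal.mp hij, pow_add]
  ring

theorem summable_besselProdCoeff_mul_pow (μ σ y : ℝ) :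
    Summable fun n => besselProdCoeff μ σ n * y ^ n := by
  have hμ := summable_norm_iff.mpr (summable_besselCoeff_mul_pow μ y)
  have hσ := summable_norm_iff.mpr (summable_besselCoeff_mul_pow σ y)
  simp_rw [besselProdCoeff_mul_pow]
  exact (summable_norm_sum_mul_antidiagonal_of_summable_norm hμ hσ).of_norm

theorem hasSum_besselINorm_mul {μ σ : ℝ} (hμ : -1 < μ) (hσ : -1 < σ) (x : ℝ) :
    HasSum (fun n => besselProdCoeff μ σ n * (x ^ 2 / 4) ^ n)
      (besselINorm μ x * besselINorm σ x) := by
  have hsum (ρ : ℝ) := summable_norm_iff.mpr (summable_besselCoeff_mul_pow ρ (x ^ 2 / 4))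
  rw [← (hasSum_besselINorm hμ x).tsum_eq, ← (hasSum_besselINorm hσ x).tsum_eq,
    tsum_mul_tsum_eq_tsum_sum_antidiagonal_of_summable_norm (hsum μ) (hsum σ)]
  simp_rw [← besselProdCoeff_mul_pow]
  exact (summable_besselProdCoeff_mul_pow μ σ _).hasSum

theorem besselProdCoeff_eq {μ σ : ℝ} (hμ : -1 < μ) (hσ : -1 < σ) (n : ℕ) :
    besselProdCoeff μ σ n =
      n ! * (ascPochhammer ℝ n).eval (μ + σ + n + 1) * besselCoeff μ n * besselCoeff σ n := by
  have hV := sum_antidiagonal_choose_mul_ascPochhammer_eval (μ + 1) (σ + 1) n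
  rw [show μ + 1 + (σ + 1) + n - 1 = μ + σ + n + 1 by ring] at hV
  rw [besselProdCoeff, ← hV, mul_sum, sum_mul, sum_mul]
  refine sum_congr rfl fun ⟨i, j⟩ hij => ?_
  obtain rfl := HasAntidiagonal.mem_antidiagonal.mp hij
  rw [besselCoeff_eq_mul_besselCoeff_add hμ i j, besselCoeff_eq_mul_besselCoeff_add hσ j i,
    add_comm j i, Nat.cast_add_choose]
  field_simp

theorem besselProdCoeff_turan_ratio {ν : ℝ} (hν : -1 < ν) (n : ℕ) :
    (ν + 1) * besselProdCoeff ν (ν + 2) n / ((ν + 2) * besselProdCoeff (ν + 1) (ν + 1) n) =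
      (ν + n + 1) / (ν + n + 2) := by
  have hν₁ : -1 < ν + 1 := by linarith
  have hν₂ : 0 < ν + 2 := by linarith
  have h₁ := add_mul_besselCoeff_add_one hν n
  have h₂ := add_mul_besselCoeff_add_one hν₁ n
  rw [show ν + 1 + 1 = ν + 2 by ring] at h₂
  have hc := besselCoeff_pos hν n
  have hc₁ := besselCoeff_pos hν₁ n
  have hA := ascPochhammer_pos n (ν + 1 + (ν + 1) + n + 1) (by linarith [n.cast_nonneg' (α := ℝ)])
  rw [besselProdCoeff_eq hν (by linarith), besselProdCoeff_eq hν₁ hν₁,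
    show ν + (ν + 2) = ν + 1 + (ν + 1) by ring,
    div_eq_div_iff (by positivity) (by linarith [n.cast_nonneg' (α := ℝ)])]
  linear_combination ((ν + 1) * n ! * (ascPochhammer ℝ n).eval (ν + 1 + (ν + 1) + n + 1) *
    besselCoeff ν n) * h₂ - ((ν + 2) * n ! * (ascPochhammer ℝ n).eval (ν + 1 + (ν + 1) + n + 1) *
    besselCoeff (ν + 1) n) * h₁

theorem turan_quotient_monotone (ν : ℝ) (hν : ν > -1) :
    MonotoneOn (fun x => ((ν + 1) * besselINorm ν x * besselINorm (ν + 2) x) /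
      ((ν + 2) * besselINorm (ν + 1) x ^ 2)) (Set.Ioi 0) := by
  have hν₁ : -1 < ν + 1 := by linarith
  have hν₂ : -1 < ν + 2 := by linarith
  have hratio : Monotone fun n : ℕ => (ν + n + 1) / (ν + n + 2) := by
    intro m n hmn
    have : (m : ℝ) ≤ n := by exact_mod_cast hmn
    rw [div_le_div_iff₀ (by linarith [m.cast_nonneg' (α := ℝ)]) (by linarith)]
    linarith
  have hF := monotoneOn_tsum_mul_pow_div_tsum_mul_pow
    (a := fun n => (ν + 1) * besselProdCoeff ν (ν + 2) n)
    (b := fun n => (ν + 2) * besselProdCoeff (ν + 1) (ν + 1) n)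
    (fun n => mul_pos (by linarith) (besselProdCoeff_pos hν₁ hν₁ n))
    (by simpa only [besselProdCoeff_turan_ratio hν] using hratio)
    (fun y _ => by simpa only [mul_assoc] using (summable_besselProdCoeff_mul_pow _ _ y).mul_left _)
    (fun y _ => by simpa only [mul_assoc] using (summable_besselProdCoeff_mul_pow _ _ y).mul_left _)
  intro x hx z hz hxz
  convert hF (by positivity : 0 ≤ x ^ 2 / 4) (by positivity : 0 ≤ z ^ 2 / 4)
    (by gcongr; exact le_of_lt hx) using 1 <;>
  · simp only [mul_assoc, tsum_mul_left, (hasSum_besselINorm_mul hν hν₂ _).tsum_eq,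
      (hasSum_besselINorm_mul hν₁ hν₁ _).tsum_eq]
    ring
end
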